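/- arXiv:0908.0845 — 4 statements merged into one kernel-verified Lean document; each statement's English description precedes it below -/
import Mathlib

section
/- If K and L are simplicial complexes, then the Sarkaria index of their join satisfies Sind(K * L) = Sind(K) + Sind(L) + 1. -/
open scoped Classical

noncomputable section

/-- Euclidean `n`-space. -/
abbrev Esp (n : ℕ) := EuclideanSpace ℝ (Fin n)

/-- An abstract simplicial complex on vertex set `V`, given as a downward
closed family of finite sets containing the empty face. -/
def IsComplex {V : Type*} (K : Finset (Finset V)) : Prop :=
  ∅ ∈ K ∧ ∀ σ ∈ K, ∀ τ ⊆ σ, τ ∈ K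

/-- Inclusion-minimal non-faces of a family of finite sets. -/
def minNonfaces {V : Type*} (K : Finset (Finset V)) : Set (Finset V) :=
  {σ | σ ∉ K ∧ ∀ τ ⊂ σ, τ ∈ K}

/-- The Kneser graph of a set system: vertices are the members, edges are
disjoint pairs. -/
def kneserGraph {V : Type*} (N : Set (Finset V)) : SimpleGraph N where
  Adj A B := A ≠ B ∧ Disjoint A.1 B.1
  symm := by
    constructor
    intro A B h
    exact ⟨fun e => h.1 e.symm, h.2.symm⟩
  loopless := by
    constructor
    intro A h
    exact h.1 rfl

/-- The chromatic number of a graph, as a natural number. -/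
def chromNum {α : Type*} (G : SimpleGraph α) : ℕ := sInf {n | G.Colorable n}

/-- The Sarkaria index of a simplicial complex on the (finite) vertex set `V`:
`#V − χ(KG(minimal non-faces)) − 1`. -/
def Sind {V : Type*} [Fintype V] (K : Finset (Finset V)) : ℤ :=
  (Fintype.card V : ℤ) - chromNum (kneserGraph (minNonfaces K)) - 1

/-- The canonical geometric realization of a simplicial complex on a finite
vertex set, inside Euclidean space with one coordinate per vertex. -/
def realization {V : Type*} [Fintype V] [DecidableEq V] (K : Finset (Finset V)) :
    Set (EuclideanSpace ℝ V) :=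
  ⋃ σ ∈ K, convexHull ℝ ((fun v => EuclideanSpace.single v (1 : ℝ)) '' ↑σ)

/-- `‖K‖` embeds (homeomorphically, onto a closed subset) into the `d`-sphere. -/
def EmbedsInSphere {V : Type*} [Fintype V] [DecidableEq V]
    (K : Finset (Finset V)) (d : ℕ) : Prop :=
  ∃ f : EuclideanSpace ℝ V → Esp (d + 1),
    ContinuousOn f (realization K) ∧ Set.InjOn f (realization K) ∧
      f '' realization K ⊆ Metric.sphere 0 1

/-- The embeddability dimension: least `d` with an embedding into the `d`-sphere. -/
def Edim {V : Type*} [Fintype V] [DecidableEq V] (K : Finset (Finset V)) : ℕ :=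
  sInf {d | EmbedsInSphere K d}

/-- A (convex) polytope: convex hull of finitely many points. -/
def IsPolytope {E : Type*} [AddCommGroup E] [Module ℝ E] (P : Set E) : Prop :=
  ∃ S : Finset E, P = convexHull ℝ (↑S : Set E)

/-- Dimension of a nonempty set: dimension of its affine span (0 on `∅`). -/
def dimSet {E : Type*} [AddCommGroup E] [Module ℝ E] (S : Set E) : ℕ :=
  Module.finrank ℝ (affineSpan ℝ S).direction

/-- A `k`-dimensional (nonempty, exposed) face of `P`. -/
def IsFaceDim {E : Type*} [NormedAddCommGroup E] [NormedSpace ℝ E]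
    (P F : Set E) (k : ℕ) : Prop :=
  IsExposed ℝ P F ∧ F.Nonempty ∧ dimSet F = k

/-- The face `F` of `P` is strictly preserved by the projection `π`:
its image is a proper face of `π(P)`, combinatorially isomorphic to `F`
(isomorphic face lattices), and `π⁻¹(π(F)) ∩ P = F`. -/
def StrictlyPreserved {N e : ℕ} (π : Esp N →ₗ[ℝ] Esp e) (P F : Set (Esp N)) : Prop :=
  IsExposed ℝ (π '' P) (π '' F) ∧ π '' F ≠ π '' P ∧
    Nonempty ({A : Set (Esp N) // IsExposed ℝ F A} ≃o
              {B : Set (Esp e) // IsExposed ℝ (π '' F) B}) ∧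
    π ⁻¹' (π '' F) ∩ P = F

end

/-- The join of two simplicial complexes, on the disjoint union of vertex sets. -/
def joinComplex {V W : Type*} [DecidableEq V] [DecidableEq W]
    (K : Finset (Finset V)) (L : Finset (Finset W)) : Finset (Finset (V ⊕ W)) :=
  (K ×ˢ L).image (fun p =>
    p.1.map ⟨Sum.inl, Sum.inl_injective⟩ ∪ p.2.map ⟨Sum.inr, Sum.inr_injective⟩)

section SindJoinAux

set_option linter.unusedSectionVars false

private lemma chromNum_colorable' {α : Type*} [Finite α] (G : SimpleGraph α) :
    G.Colorable (chromNum G) := by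
  have : Fintype α := Fintype.ofFinite α
  have h : Fintype.card α ∈ {n | G.Colorable n} := G.colorable_of_fintype
  exact Nat.sInf_mem ⟨_, h⟩

private lemma chromNum_le' {α : Type*} {G : SimpleGraph α} {n : ℕ} (h : G.Colorable n) :
    chromNum G ≤ n := Nat.sInf_le h

variable {V W : Type*} [DecidableEq V] [DecidableEq W]

private lemma map_union_eq_disjSum (a : Finset V) (b : Finset W) :
    a.map ⟨Sum.inl, Sum.inl_injective⟩ ∪ b.map ⟨Sum.inr, Sum.inr_injective⟩ = a.disjSum b := by
  ext x
  cases x <;>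
    simp [Finset.mem_disjSum, Finset.mem_map, Function.Embedding.coeFn_mk]

private lemma mem_joinComplex {K : Finset (Finset V)} {L : Finset (Finset W)}
    {σ : Finset (V ⊕ W)} :
    σ ∈ joinComplex K L ↔ σ.toLeft ∈ K ∧ σ.toRight ∈ L := by
  constructor
  · intro h
    simp only [joinComplex, Finset.mem_image, Finset.mem_product] at h
    obtain ⟨⟨a, b⟩, ⟨ha, hb⟩, rfl⟩ := h
    rw [map_union_eq_disjSum]
    simp [ha, hb]
  · rintro ⟨h1, h2⟩
    simp only [joinComplex, Finset.mem_image, Finset.mem_product]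
    exact ⟨(σ.toLeft, σ.toRight), ⟨h1, h2⟩,
      by rw [map_union_eq_disjSum, Finset.toLeft_disjSum_toRight]⟩

private lemma minNonfaces_join {K : Finset (Finset V)} {L : Finset (Finset W)}
    (hK : IsComplex K) (hL : IsComplex L) {σ : Finset (V ⊕ W)} :
    σ ∈ minNonfaces (joinComplex K L) ↔
      (σ.toRight = ∅ ∧ σ.toLeft ∈ minNonfaces K) ∨
      (σ.toLeft = ∅ ∧ σ.toRight ∈ minNonfaces L) := by
  have hσ : σ = σ.toLeft.disjSum σ.toRight := (Finset.toLeft_disjSum_toRight).symm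
  constructor
  · rintro ⟨hn, hmin⟩
    rw [mem_joinComplex, not_and_or] at hn
    rcases hn with hA | hB
    · left
      have hRe : σ.toRight = ∅ := by
        by_contra hne
        have hss : σ.toLeft.disjSum (∅ : Finset W) ⊂ σ := by
          have h1 : σ.toLeft.disjSum (∅ : Finset W) ⊂ σ.toLeft.disjSum σ.toRight :=
            Finset.disjSum_ssubset_disjSum_of_subset_of_ssubset Finset.Subset.rfl
              (Finset.nonempty_iff_ne_empty.mpr hne).empty_ssubset
          rwa [Finset.toLeft_disjSum_toRight] at h1
        have := hmin _ hss
        rw [mem_joinComplex] at this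
        simp only [Finset.toLeft_disjSum] at this
        exact hA this.1
      refine ⟨hRe, hA, fun τ hτ => ?_⟩
      have hss : τ.disjSum (∅ : Finset W) ⊂ σ := by
        have h1 : τ.disjSum (∅ : Finset W) ⊂ σ.toLeft.disjSum σ.toRight := by
          rw [← hRe]
          exact Finset.disjSum_ssubset_disjSum_of_ssubset_of_subset hτ
            (hRe ▸ Finset.Subset.rfl)
        rwa [Finset.toLeft_disjSum_toRight] at h1
      have := hmin _ hss
      rw [mem_joinComplex] at this
      rw [Finset.toLeft_disjSum] at this
      exact this.1
    · right
      have hLe : σ.toLeft = ∅ := by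
        by_contra hne
        have hss : (∅ : Finset V).disjSum σ.toRight ⊂ σ := by
          have h1 : (∅ : Finset V).disjSum σ.toRight ⊂ σ.toLeft.disjSum σ.toRight :=
            Finset.disjSum_ssubset_disjSum_of_ssubset_of_subset
              (Finset.nonempty_iff_ne_empty.mpr hne).empty_ssubset Finset.Subset.rfl
          rwa [Finset.toLeft_disjSum_toRight] at h1
        have := hmin _ hss
        rw [mem_joinComplex] at this
        simp only [Finset.toRight_disjSum] at this
        exact hB this.2
      refine ⟨hLe, hB, fun τ hτ => ?_⟩
      have hss : (∅ : Finset V).disjSum τ ⊂ σ := by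
        have h1 : (∅ : Finset V).disjSum τ ⊂ σ.toLeft.disjSum σ.toRight := by
          rw [← hLe]
          exact Finset.disjSum_ssubset_disjSum_of_subset_of_ssubset
            (hLe ▸ Finset.Subset.rfl) hτ
        rwa [Finset.toLeft_disjSum_toRight] at h1
      have := hmin _ hss
      rw [mem_joinComplex] at this
      rw [Finset.toRight_disjSum] at this
      exact this.2
  · rintro (⟨hRe, hA, hAmin⟩ | ⟨hLe, hB, hBmin⟩)
    · refine ⟨by rw [mem_joinComplex]; exact fun h => hA h.1, fun τ hτ => ?_⟩
      rw [mem_joinComplex]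
      refine ⟨?_, ?_⟩
      · have hsub : τ.toLeft ⊂ σ.toLeft := by
          refine ⟨Finset.toLeft_subset_toLeft hτ.1, fun hge => ?_⟩
          have : σ ⊆ τ := by
            intro x hx
            have hx' := hx
            rw [hσ, hRe] at hx'
            rcases Finset.mem_disjSum.mp hx' with ⟨a, ha, rfl⟩ | ⟨b, hb, _⟩
            · exact Finset.mem_toLeft.mp (hge (Finset.mem_toLeft.mpr hx))
            · simp at hb
          exact hτ.2 this
        exact hAmin _ hsub
      · have : τ.toRight ⊆ σ.toRight := Finset.toRight_subset_toRight hτ.1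
        rw [hRe, Finset.subset_empty] at this
        rw [this]
        exact hL.1
    · refine ⟨by rw [mem_joinComplex]; exact fun h => hB h.2, fun τ hτ => ?_⟩
      rw [mem_joinComplex]
      refine ⟨?_, ?_⟩
      · have : τ.toLeft ⊆ σ.toLeft := Finset.toLeft_subset_toLeft hτ.1
        rw [hLe, Finset.subset_empty] at this
        rw [this]
        exact hK.1
      · have hsub : τ.toRight ⊂ σ.toRight := by
          refine ⟨Finset.toRight_subset_toRight hτ.1, fun hge => ?_⟩
          have : σ ⊆ τ := by
            intro x hx
            have hx' := hx
            rw [hσ, hLe] at hx'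
            rcases Finset.mem_disjSum.mp hx' with ⟨a, ha, _⟩ | ⟨b, hb, rfl⟩
            · simp at ha
            · exact Finset.mem_toRight.mp (hge (Finset.mem_toRight.mpr hx))
          exact hτ.2 this
        exact hBmin _ hsub

private lemma disjoint_toLeft' {s t : Finset (V ⊕ W)} (h : Disjoint s t) :
    Disjoint s.toLeft t.toLeft := by
  rw [Finset.disjoint_left] at h ⊢
  intro a ha hb
  exact h (Finset.mem_toLeft.mp ha) (Finset.mem_toLeft.mp hb)

private lemma disjoint_toRight' {s t : Finset (V ⊕ W)} (h : Disjoint s t) :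
    Disjoint s.toRight t.toRight := by
  rw [Finset.disjoint_left] at h ⊢
  intro a ha hb
  exact h (Finset.mem_toRight.mp ha) (Finset.mem_toRight.mp hb)

private lemma disjoint_disjSum_left {A B : Finset V} (h : Disjoint A B) :
    Disjoint (A.disjSum (∅ : Finset W)) (B.disjSum (∅ : Finset W)) := by
  rw [Finset.disjoint_left] at h ⊢
  intro x hx hx2
  rcases Finset.mem_disjSum.mp hx with ⟨a, ha, rfl⟩ | ⟨b, hb, rfl⟩
  · exact h ha (by simpa using hx2)
  · simp at hb

private lemma disjoint_disjSum_right {A B : Finset W} (h : Disjoint A B) :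
    Disjoint ((∅ : Finset V).disjSum A) ((∅ : Finset V).disjSum B) := by
  rw [Finset.disjoint_left] at h ⊢
  intro x hx hx2
  rcases Finset.mem_disjSum.mp hx with ⟨a, ha, rfl⟩ | ⟨b, hb, rfl⟩
  · simp at ha
  · exact h hb (by simpa using hx2)

private lemma disjoint_disjSum_cross (A : Finset V) (B : Finset W) :
    Disjoint (A.disjSum (∅ : Finset W)) ((∅ : Finset V).disjSum B) := by
  rw [Finset.disjoint_left]
  intro x hx hx2
  rcases Finset.mem_disjSum.mp hx with ⟨a, ha, rfl⟩ | ⟨b, hb, rfl⟩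
  · simp at hx2
  · simp at hb

private lemma chromNum_join {V W : Type*} [Fintype V] [DecidableEq V] [Fintype W]
    [DecidableEq W] (K : Finset (Finset V)) (L : Finset (Finset W))
    (hK : IsComplex K) (hL : IsComplex L) :
    chromNum (kneserGraph (minNonfaces (joinComplex K L))) =
      chromNum (kneserGraph (minNonfaces K)) + chromNum (kneserGraph (minNonfaces L)) := by
  classical
  set NK := minNonfaces K with hNKdef
  set NL := minNonfaces L with hNLdef
  set NJ := minNonfaces (joinComplex K L) with hNJdef
  -- minimal nonfaces are nonempty
  have hKne : ∀ A ∈ NK, A ≠ ∅ := by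
    rintro A hA rfl; exact hA.1 hK.1
  have hLne : ∀ B ∈ NL, B ≠ ∅ := by
    rintro B hB rfl; exact hB.1 hL.1
  -- embeddings of the vertex sets
  have memJL : ∀ A ∈ NK, (Finset.disjSum A (∅ : Finset W)) ∈ NJ := fun A hA =>
    (minNonfaces_join hK hL).mpr (Or.inl ⟨Finset.toRight_disjSum, by rw [Finset.toLeft_disjSum]; exact hA⟩)
  have memJR : ∀ B ∈ NL, (Finset.disjSum (∅ : Finset V) B) ∈ NJ := fun B hB =>
    (minNonfaces_join hK hL).mpr (Or.inr ⟨Finset.toLeft_disjSum, by rw [Finset.toRight_disjSum]; exact hB⟩)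
  apply le_antisymm
  · -- upper bound
    obtain ⟨CG⟩ := chromNum_colorable' (kneserGraph NK)
    obtain ⟨CH⟩ := chromNum_colorable' (kneserGraph NL)
    have hmem : ∀ v : NJ, ¬(v.1.toRight = ∅ ∧ v.1.toLeft ∈ NK) →
        v.1.toLeft = ∅ ∧ v.1.toRight ∈ NL := by
      intro v h
      rcases (minNonfaces_join hK hL).mp v.2 with h1 | h2
      · exact absurd h1 h
      · exact h2
    set cG := chromNum (kneserGraph NK)
    set cH := chromNum (kneserGraph NL)
    let f : NJ → Fin cG ⊕ Fin cH := fun v =>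
      if h : v.1.toRight = ∅ ∧ v.1.toLeft ∈ NK
      then Sum.inl (CG ⟨v.1.toLeft, h.2⟩)
      else Sum.inr (CH ⟨v.1.toRight, (hmem v h).2⟩)
    have valid : ∀ {v w : NJ}, (kneserGraph NJ).Adj v w → f v ≠ f w := by
      intro v w hadj
      obtain ⟨hne, hdisj⟩ := hadj
      have keyL : ∀ x y : NJ, x.1.toRight = ∅ → y.1.toRight = ∅ →
          x.1.toLeft = y.1.toLeft → x = y := by
        intro x y hx hy hxy
        apply Subtype.ext
        rw [← Finset.toLeft_disjSum_toRight (u := x.1),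
          ← Finset.toLeft_disjSum_toRight (u := y.1), hx, hy, hxy]
      have keyR : ∀ x y : NJ, x.1.toLeft = ∅ → y.1.toLeft = ∅ →
          x.1.toRight = y.1.toRight → x = y := by
        intro x y hx hy hxy
        apply Subtype.ext
        rw [← Finset.toLeft_disjSum_toRight (u := x.1),
          ← Finset.toLeft_disjSum_toRight (u := y.1), hx, hy, hxy]
      by_cases hv : v.1.toRight = ∅ ∧ v.1.toLeft ∈ NK <;>
        by_cases hw : w.1.toRight = ∅ ∧ w.1.toLeft ∈ NK
      · simp only [f, dif_pos hv, dif_pos hw]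
        intro hcol
        have := CG.valid (v := ⟨v.1.toLeft, hv.2⟩) (w := ⟨w.1.toLeft, hw.2⟩)
          ⟨fun e => hne (keyL v w hv.1 hw.1 (congrArg Subtype.val e)),
            disjoint_toLeft' hdisj⟩
        exact this (Sum.inl.inj hcol)
      · simp only [f, dif_pos hv, dif_neg hw]
        exact fun hcol => Sum.inl_ne_inr hcol
      · simp only [f, dif_neg hv, dif_pos hw]
        exact fun hcol => Sum.inr_ne_inl hcol
      · simp only [f, dif_neg hv, dif_neg hw]
        intro hcol
        have := CH.valid (v := ⟨v.1.toRight, (hmem v hv).2⟩)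
          (w := ⟨w.1.toRight, (hmem w hw).2⟩)
          ⟨fun e => hne (keyR v w (hmem v hv).1 (hmem w hw).1 (congrArg Subtype.val e)),
            disjoint_toRight' hdisj⟩
        exact this (Sum.inr.inj hcol)
    have C : (kneserGraph NJ).Coloring (Fin cG ⊕ Fin cH) :=
      SimpleGraph.Coloring.mk f fun h => valid h
    have hcol := C.colorable
    rw [Fintype.card_sum, Fintype.card_fin, Fintype.card_fin] at hcol
    exact chromNum_le' hcol
  · -- lower bound
    obtain ⟨CJ⟩ := chromNum_colorable' (kneserGraph NJ)
    set cJ := chromNum (kneserGraph NJ) with hcJ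
    let embL : NK → NJ := fun A => ⟨Finset.disjSum A.1 ∅, memJL A.1 A.2⟩
    let embR : NL → NJ := fun B => ⟨Finset.disjSum ∅ B.1, memJR B.1 B.2⟩
    let S : Finset (Fin cJ) := Finset.univ.filter (fun c => ∃ A : NK, CJ (embL A) = c)
    let T : Finset (Fin cJ) := Finset.univ.filter (fun c => ∃ B : NL, CJ (embR B) = c)
    have hST : Disjoint S T := by
      rw [Finset.disjoint_left]
      rintro c hcS hcT
      obtain ⟨A, hA⟩ := (Finset.mem_filter.mp hcS).2
      obtain ⟨B, hB⟩ := (Finset.mem_filter.mp hcT).2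
      have hadj : (kneserGraph NJ).Adj (embL A) (embR B) := by
        refine ⟨?_, disjoint_disjSum_cross A.1 B.1⟩
        intro e
        have := congrArg Subtype.val e
        simp only [embL, embR] at this
        exact hKne A.1 A.2 (Finset.disjSum_inj.mp this).1
      exact CJ.valid hadj (hA.trans hB.symm)
    have hG : (kneserGraph NK).Colorable S.card := by
      have CS : (kneserGraph NK).Coloring ↥S := SimpleGraph.Coloring.mk
        (fun A => ⟨CJ (embL A), Finset.mem_filter.mpr ⟨Finset.mem_univ _, A, rfl⟩⟩)
        (by
          intro A B hadj hcol
          have hadj' : (kneserGraph NJ).Adj (embL A) (embL B) := by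
            refine ⟨?_, disjoint_disjSum_left hadj.2⟩
            intro e
            have := congrArg Subtype.val e
            simp only [embL] at this
            exact hadj.1 (Subtype.ext (Finset.disjSum_inj.mp this).1)
          exact CJ.valid hadj' (congrArg Subtype.val hcol))
      have := CS.colorable
      rwa [Fintype.card_coe] at this
    have hH : (kneserGraph NL).Colorable T.card := by
      have CT : (kneserGraph NL).Coloring ↥T := SimpleGraph.Coloring.mk
        (fun B => ⟨CJ (embR B), Finset.mem_filter.mpr ⟨Finset.mem_univ _, B, rfl⟩⟩)
        (by
          intro A B hadj hcol
          have hadj' : (kneserGraph NJ).Adj (embR A) (embR B) := by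
            refine ⟨?_, disjoint_disjSum_right hadj.2⟩
            intro e
            have := congrArg Subtype.val e
            simp only [embR] at this
            exact hadj.1 (Subtype.ext (Finset.disjSum_inj.mp this).2)
          exact CJ.valid hadj' (congrArg Subtype.val hcol))
      have := CT.colorable
      rwa [Fintype.card_coe] at this
    calc chromNum (kneserGraph NK) + chromNum (kneserGraph NL)
        ≤ S.card + T.card := add_le_add (chromNum_le' hG) (chromNum_le' hH)
      _ = (S ∪ T).card := (Finset.card_union_of_disjoint hST).symm
      _ ≤ Fintype.card (Fin cJ) := Finset.card_le_univ _
      _ = cJ := Fintype.card_fin _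

end SindJoinAux

/-- the Sarkaria index of a join: `Sind(K * L) = Sind K + Sind L + 1`. -/
theorem sind_join {V W : Type*} [Fintype V] [DecidableEq V] [Fintype W] [DecidableEq W]
    (K : Finset (Finset V)) (L : Finset (Finset W))
    (hK : IsComplex K) (hL : IsComplex L) :
    Sind (joinComplex K L) = Sind K + Sind L + 1 := by
  rw [Sind, Sind, Sind, chromNum_join K L hK hL, Fintype.card_sum]
  push_cast
  ring
end

section
/- For m ≥ 3, the Sarkaria index of the 0-th coskeleton complex of an m-gon equals m − 3 if m is even, and m − 2 if m is odd. -/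
open scoped Classical

/-- Cyclic successor in `Fin m`. -/
def cyclicSucc {m : ℕ} (v : Fin m) : Fin m := ⟨((v : ℕ) + 1) % m, Nat.mod_lt _ v.pos⟩

/-- The 0-th coskeleton complex of the `m`-gon whose edges are labeled
cyclically by `Fin m`: all sets of edges avoiding both edges at some vertex. -/
noncomputable def polygonCoskel0 (m : ℕ) : Finset (Finset (Fin m)) :=
  Finset.univ.filter (fun τ => ∃ v : Fin m, v ∉ τ ∧ cyclicSucc v ∉ τ)

namespace PolygonAux

variable {m : ℕ}

lemma mem_coskel {τ : Finset (Fin m)} :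
    τ ∈ polygonCoskel0 m ↔ ∃ v : Fin m, v ∉ τ ∧ cyclicSucc v ∉ τ := by
  simp [polygonCoskel0]

lemma not_mem_coskel {τ : Finset (Fin m)} :
    τ ∉ polygonCoskel0 m ↔ ∀ v : Fin m, v ∈ τ ∨ cyclicSucc v ∈ τ := by
  rw [mem_coskel]
  push_neg
  constructor
  · intro h v; by_cases hv : v ∈ τ
    · exact Or.inl hv
    · exact Or.inr (h v hv)
  · intro h v hv; rcases h v with h' | h'
    · exact absurd h' hv
    · exact h'

lemma even_of_disjoint_covers (hm : 0 < m) (A B : Finset (Fin m))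
    (hA : ∀ v, v ∈ A ∨ cyclicSucc v ∈ A) (hB : ∀ v, v ∈ B ∨ cyclicSucc v ∈ B)
    (hd : Disjoint A B) : Even m := by
  have step : ∀ v : Fin m, (cyclicSucc v ∈ A ↔ v ∉ A) := by
    intro v
    constructor
    · intro hs hv
      rcases hB v with h | h
      · exact (Finset.disjoint_left.mp hd hv) h
      · exact (Finset.disjoint_left.mp hd hs) h
    · intro hv
      rcases hA v with h | h
      · exact absurd h hv
      · exact h
  set f : ℕ → Fin m := fun n => ⟨n % m, Nat.mod_lt _ hm⟩ with hf
  have hsucc : ∀ n, cyclicSucc (f n) = f (n + 1) := by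
    intro n
    apply Fin.ext
    simp [cyclicSucc, hf, Nat.mod_add_mod]
  have key : ∀ n, (f n ∈ A ↔ (Even n ↔ f 0 ∈ A)) := by
    intro n
    induction n with
    | zero => simp
    | succ k ih =>
      have h1 := step (f k)
      rw [hsucc k] at h1
      rw [h1, Nat.even_add_one]
      tauto
  have h0 : f m = f 0 := by
    apply Fin.ext
    simp [hf]
  have := key m
  rw [h0] at this
  tauto

/-- The set of even-labeled edges. -/
def evens (m : ℕ) : Finset (Fin m) := Finset.univ.filter (fun v => (v : ℕ) % 2 = 0)

/-- The set of odd-labeled edges. -/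
def odds (m : ℕ) : Finset (Fin m) := Finset.univ.filter (fun v => (v : ℕ) % 2 = 1)

lemma mem_evens {v : Fin m} : v ∈ evens m ↔ (v : ℕ) % 2 = 0 := by simp [evens]

lemma mem_odds {v : Fin m} : v ∈ odds m ↔ (v : ℕ) % 2 = 1 := by simp [odds]

lemma cyclicSucc_val (v : Fin m) : (cyclicSucc v : ℕ) = ((v : ℕ) + 1) % m := rfl

lemma evens_mem_minNonfaces (he : Even m) :
    evens m ∈ minNonfaces (polygonCoskel0 m) := by
  obtain ⟨k, hk⟩ := he
  constructor
  · rw [not_mem_coskel]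
    intro v
    by_cases hv : (v : ℕ) % 2 = 0
    · exact Or.inl (mem_evens.mpr hv)
    · right
      rw [mem_evens, cyclicSucc_val]
      have hlt : (v : ℕ) < m := v.isLt
      rcases Nat.lt_or_ge ((v : ℕ) + 1) m with h1 | h1
      · rw [Nat.mod_eq_of_lt h1]; omega
      · have : (v : ℕ) + 1 = m := by omega
        rw [this, Nat.mod_self]
  · intro τ hτ
    obtain ⟨w, hwA, hwτ⟩ := Finset.exists_of_ssubset hτ
    rw [mem_coskel]
    refine ⟨w, hwτ, fun hc => ?_⟩
    have hce : cyclicSucc w ∈ evens m := hτ.subset hc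
    rw [mem_evens, cyclicSucc_val] at hce
    rw [mem_evens] at hwA
    have hlt : (w : ℕ) < m := w.isLt
    rcases Nat.lt_or_ge ((w : ℕ) + 1) m with h1 | h1
    · rw [Nat.mod_eq_of_lt h1] at hce; omega
    · have : (w : ℕ) + 1 = m := by omega
      omega

lemma odds_mem_minNonfaces (he : Even m) :
    odds m ∈ minNonfaces (polygonCoskel0 m) := by
  obtain ⟨k, hk⟩ := he
  constructor
  · rw [not_mem_coskel]
    intro v
    by_cases hv : (v : ℕ) % 2 = 1
    · exact Or.inl (mem_odds.mpr hv)
    · right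
      rw [mem_odds, cyclicSucc_val]
      have hlt : (v : ℕ) < m := v.isLt
      rcases Nat.lt_or_ge ((v : ℕ) + 1) m with h1 | h1
      · rw [Nat.mod_eq_of_lt h1]; omega
      · omega
  · intro τ hτ
    obtain ⟨w, hwA, hwτ⟩ := Finset.exists_of_ssubset hτ
    rw [mem_coskel]
    refine ⟨w, hwτ, fun hc => ?_⟩
    have hce : cyclicSucc w ∈ odds m := hτ.subset hc
    rw [mem_odds, cyclicSucc_val] at hce
    rw [mem_odds] at hwA
    have hlt : (w : ℕ) < m := w.isLt
    rcases Nat.lt_or_ge ((w : ℕ) + 1) m with h1 | h1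
    · rw [Nat.mod_eq_of_lt h1] at hce; omega
    · have h2 : (w : ℕ) + 1 = m := by omega
      rw [h2, Nat.mod_self] at hce; omega

lemma minNonfaces_nonempty (hm : 0 < m) :
    (minNonfaces (polygonCoskel0 m)).Nonempty := by
  have huniv : (Finset.univ : Finset (Fin m)) ∉ polygonCoskel0 m := by
    rw [not_mem_coskel]
    intro v
    exact Or.inl (Finset.mem_univ v)
  obtain ⟨σ, hσ, hmin⟩ := exists_minimal_of_wellFoundedLT
    (fun τ : Finset (Fin m) => τ ∉ polygonCoskel0 m) ⟨Finset.univ, huniv⟩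
  refine ⟨σ, hσ, ?_⟩
  intro τ hτ
  by_contra hτK
  exact hτ.2 (hmin hτK hτ.1)

lemma colorable_two (hm : 0 < m) :
    (kneserGraph (minNonfaces (polygonCoskel0 m))).Colorable 2 := by
  set z : Fin m := ⟨0, hm⟩ with hz
  refine ⟨SimpleGraph.Coloring.mk
    (fun A => if z ∈ A.1 then (0 : Fin 2) else 1) ?_⟩
  rintro A B ⟨hne, hd⟩
  have hA : ∀ v, v ∈ A.1 ∨ cyclicSucc v ∈ A.1 := not_mem_coskel.mp A.2.1
  have hB : ∀ v, v ∈ B.1 ∨ cyclicSucc v ∈ B.1 := not_mem_coskel.mp B.2.1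
  by_cases h0A : z ∈ A.1 <;> by_cases h0B : z ∈ B.1
  · exact absurd h0B (Finset.disjoint_left.mp hd h0A)
  · simp [h0A, h0B]
  · simp [h0A, h0B]
  · have hsA : cyclicSucc z ∈ A.1 := (hA z).resolve_left h0A
    have hsB : cyclicSucc z ∈ B.1 := (hB z).resolve_left h0B
    exact absurd hsB (Finset.disjoint_left.mp hd hsA)

lemma colorable_one (hm : 0 < m) (ho : ¬ Even m) :
    (kneserGraph (minNonfaces (polygonCoskel0 m))).Colorable 1 := by
  refine ⟨SimpleGraph.Coloring.mk (fun _ => 0) ?_⟩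
  rintro A B ⟨hne, hd⟩
  exact absurd (even_of_disjoint_covers hm A.1 B.1
    (not_mem_coskel.mp A.2.1) (not_mem_coskel.mp B.2.1) hd) ho

lemma not_colorable_zero (hm : 0 < m) :
    ¬ (kneserGraph (minNonfaces (polygonCoskel0 m))).Colorable 0 := by
  rintro ⟨C⟩
  obtain ⟨σ, hσ⟩ := minNonfaces_nonempty hm
  exact (C ⟨σ, hσ⟩).elim0

lemma not_colorable_one (hm : 3 ≤ m) (he : Even m) :
    ¬ (kneserGraph (minNonfaces (polygonCoskel0 m))).Colorable 1 := by
  rintro ⟨C⟩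
  set z : Fin m := ⟨0, by omega⟩ with hz
  have h0e : z ∈ evens m := by rw [mem_evens]; rfl
  have hzv : (z : ℕ) = 0 := rfl
  have h0o : z ∉ odds m := by rw [mem_odds, hzv]; omega
  have hne : evens m ≠ odds m := fun h => h0o (h ▸ h0e)
  have hdisj : Disjoint (evens m) (odds m) := by
    rw [Finset.disjoint_left]
    intro a ha hb
    rw [mem_evens] at ha
    rw [mem_odds] at hb
    omega
  have hadj : (kneserGraph (minNonfaces (polygonCoskel0 m))).Adj
      ⟨evens m, evens_mem_minNonfaces he⟩ ⟨odds m, odds_mem_minNonfaces he⟩ := by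
    exact ⟨fun h => hne (Subtype.mk_eq_mk.mp h), hdisj⟩
  exact C.valid hadj (Subsingleton.elim _ _)

lemma chromNum_eq_two (hm : 3 ≤ m) (he : Even m) :
    chromNum (kneserGraph (minNonfaces (polygonCoskel0 m))) = 2 := by
  have h2 : (2 : ℕ) ∈ {n | (kneserGraph (minNonfaces (polygonCoskel0 m))).Colorable n} :=
    colorable_two (by omega)
  apply le_antisymm
  · exact Nat.sInf_le h2
  · apply le_csInf ⟨2, h2⟩
    intro n hn
    by_contra hlt
    push_neg at hlt
    have hn' : (kneserGraph (minNonfaces (polygonCoskel0 m))).Colorable n := hn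
    exact not_colorable_one hm he (hn'.mono (by omega))

lemma chromNum_eq_one (hm : 3 ≤ m) (ho : ¬ Even m) :
    chromNum (kneserGraph (minNonfaces (polygonCoskel0 m))) = 1 := by
  have h1 : (1 : ℕ) ∈ {n | (kneserGraph (minNonfaces (polygonCoskel0 m))).Colorable n} :=
    colorable_one (by omega : 0 < m) ho
  apply le_antisymm
  · exact Nat.sInf_le h1
  · apply le_csInf ⟨1, h1⟩
    intro n hn
    by_contra hlt
    push_neg at hlt
    have hn' : (kneserGraph (minNonfaces (polygonCoskel0 m))).Colorable n := hn
    exact not_colorable_zero (by omega) (hn'.mono (by omega))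

end PolygonAux

/-- the Sarkaria index of the 0-th coskeleton complex of
an `m`-gon is `m − 3` for even `m` and `m − 2` for odd `m`. -/
theorem sind_polygon_coskel0 (m : ℕ) (hm : 3 ≤ m) :
    Sind (polygonCoskel0 m) = if Even m then (m : ℤ) - 3 else (m : ℤ) - 2 := by
  by_cases he : Even m
  · rw [if_pos he]
    rw [Sind, PolygonAux.chromNum_eq_two hm he]
    simp
    ring
  · rw [if_neg he]
    rw [Sind, PolygonAux.chromNum_eq_one hm he]
    simp
    ring
end

section
/- For even m ≥ 4, the Kneser graph on the minimal non-faces of Σ_0(𝒫_m) has exactly one edge (between the two perfect matchings of the cycle C_m, i.e., the sets of odd-indexed and of even-indexed edges), and all other vertices are isolated; for odd m, this Kneser graph has no edges. -/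
open scoped Classical

lemma nonface_iff_cover {m : ℕ} (τ : Finset (Fin m)) :
    τ ∉ polygonCoskel0 m ↔ ∀ v : Fin m, v ∈ τ ∨ cyclicSucc v ∈ τ := by
  simp only [polygonCoskel0, Finset.mem_filter, Finset.mem_univ, true_and, not_exists]
  push_neg
  constructor
  · intro h v
    by_contra hc
    push_neg at hc
    exact absurd (h v hc.1) (by simpa using hc.2)
  · intro h v hv
    rcases h v with h' | h'
    · exact absurd h' hv
    · exact h'

lemma alt_parity {m : ℕ} (hm : 0 < m) (C : Finset (Fin m))
    (h : ∀ v : Fin m, v ∈ C ↔ cyclicSucc v ∉ C) :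
    ∀ k (hk : k < m), ((⟨k, hk⟩ : Fin m) ∈ C ↔ (k % 2 = 0 ↔ (⟨0, hm⟩ : Fin m) ∈ C)) := by
  intro k
  induction k with
  | zero => intro hk; simp
  | succ k ih =>
    intro hk
    have hk' : k < m := Nat.lt_of_succ_lt hk
    have hsucc : cyclicSucc (⟨k, hk'⟩ : Fin m) = ⟨k + 1, hk⟩ := by
      apply Fin.ext
      simp [cyclicSucc, Nat.mod_eq_of_lt hk]
    have h1 := h (⟨k, hk'⟩ : Fin m)
    rw [hsucc] at h1
    have h2 := ih hk'
    have hpar : (k + 1) % 2 = 0 ↔ ¬ k % 2 = 0 := by omega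
    rw [h2] at h1
    rw [hpar]
    tauto

/-- for even `m` the Kneser graph of minimal non-faces of
`Σ_0(𝒫_m)` has exactly one edge, between the sets of even- and odd-indexed
edges (the two perfect matchings of `C_m`); for odd `m` it has no edges. -/
theorem kneser_polygon_coskel0_edges (m : ℕ) (hm : 3 ≤ m) :
    (Even m →
      ∀ A B : minNonfaces (polygonCoskel0 m),
        (kneserGraph (minNonfaces (polygonCoskel0 m))).Adj A B ↔
          ((A.1 = Finset.univ.filter (fun i : Fin m => (i : ℕ) % 2 = 0) ∧
            B.1 = Finset.univ.filter (fun i : Fin m => (i : ℕ) % 2 = 1)) ∨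
           (A.1 = Finset.univ.filter (fun i : Fin m => (i : ℕ) % 2 = 1) ∧
            B.1 = Finset.univ.filter (fun i : Fin m => (i : ℕ) % 2 = 0)))) ∧
    (Odd m →
      ∀ A B : minNonfaces (polygonCoskel0 m),
        ¬ (kneserGraph (minNonfaces (polygonCoskel0 m))).Adj A B) := by
  have hm0 : 0 < m := by omega
  -- From adjacency, derive the alternation property for A.1
  have key : ∀ A B : minNonfaces (polygonCoskel0 m),
      (kneserGraph (minNonfaces (polygonCoskel0 m))).Adj A B →
      (∀ v : Fin m, v ∈ A.1 ↔ cyclicSucc v ∉ A.1) ∧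
      (∀ v : Fin m, v ∈ B.1 ↔ v ∉ A.1) := by
    intro A B hAdj
    obtain ⟨hne, hdisj⟩ := hAdj
    have hC : ∀ v : Fin m, v ∈ A.1 ∨ cyclicSucc v ∈ A.1 :=
      (nonface_iff_cover A.1).mp A.2.1
    have hD : ∀ v : Fin m, v ∈ B.1 ∨ cyclicSucc v ∈ B.1 :=
      (nonface_iff_cover B.1).mp B.2.1
    have halt : ∀ v : Fin m, v ∈ A.1 ↔ cyclicSucc v ∉ A.1 := by
      intro v
      constructor
      · intro hv hsv
        rcases hD v with h' | h'
        · exact (Finset.disjoint_right.mp hdisj h') hv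
        · exact (Finset.disjoint_right.mp hdisj h') hsv
      · intro hsv
        rcases hC v with h' | h'
        · exact h'
        · exact absurd h' hsv
    refine ⟨halt, fun v => ?_⟩
    constructor
    · intro hv hva
      exact (Finset.disjoint_left.mp hdisj hva) hv
    · intro hva
      by_contra hvb
      -- v in neither: then both covers put cyclicSucc v in, contradicting disjoint
      rcases hC v with h' | h'
      · exact hva h'
      rcases hD v with h'' | h''
      · exact hvb h''
      · exact (Finset.disjoint_left.mp hdisj h') h''
  constructor
  · intro hEven A B
    constructor
    · intro hAdj
      obtain ⟨halt, hcomp⟩ := key A B hAdj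
      have hAlt := alt_parity hm0 A.1 halt
      by_cases h0 : (⟨0, hm0⟩ : Fin m) ∈ A.1
      · left
        have hA : A.1 = Finset.univ.filter (fun i : Fin m => (i : ℕ) % 2 = 0) := by
          ext v
          have := hAlt v.val v.isLt
          rw [Fin.eta] at this
          simp only [Finset.mem_filter, Finset.mem_univ, true_and]
          tauto
        refine ⟨hA, ?_⟩
        ext v
        have := hcomp v
        rw [hA] at this
        simp only [Finset.mem_filter, Finset.mem_univ, true_and] at this ⊢
        rw [this]; omega
      · right
        have hA : A.1 = Finset.univ.filter (fun i : Fin m => (i : ℕ) % 2 = 1) := by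
          ext v
          have := hAlt v.val v.isLt
          rw [Fin.eta] at this
          simp only [Finset.mem_filter, Finset.mem_univ, true_and]
          constructor
          · intro hv; by_contra hp; exact h0 ((this.mp hv).mp (by omega))
          · intro hp; rw [this]; constructor
            · intro h2; omega
            · intro h2; exact absurd h2 h0
        refine ⟨hA, ?_⟩
        ext v
        have := hcomp v
        rw [hA] at this
        simp only [Finset.mem_filter, Finset.mem_univ, true_and] at this ⊢
        rw [this]; omega
    · rintro (⟨hA, hB⟩ | ⟨hA, hB⟩) <;>
      · refine ⟨?_, ?_⟩
        · intro he
          have : A.1 = B.1 := congrArg Subtype.val he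
          rw [hA, hB] at this
          have h0 := Finset.ext_iff.mp this (⟨0, hm0⟩ : Fin m)
          simp at h0
        · rw [hA, hB, Finset.disjoint_left]
          intro v hv hv'
          simp only [Finset.mem_filter, Finset.mem_univ, true_and] at hv hv'
          omega
  · intro hOdd A B hAdj
    obtain ⟨halt, _⟩ := key A B hAdj
    have hAlt := alt_parity hm0 A.1 halt
    have hk : m - 1 < m := by omega
    have h1 := hAlt (m - 1) hk
    have h2 := halt (⟨m - 1, hk⟩ : Fin m)
    have hsucc : cyclicSucc (⟨m - 1, hk⟩ : Fin m) = ⟨0, hm0⟩ := by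
      apply Fin.ext
      show (m - 1 + 1) % m = 0
      have hmm : m - 1 + 1 = m := by omega
      rw [hmm, Nat.mod_self]
    rw [hsucc] at h2
    have hpar : (m - 1) % 2 = 0 := by
      obtain ⟨j, hj⟩ := hOdd; omega
    rw [h2] at h1
    rw [hpar] at h1
    tauto
end

section
/- For n ≥ 2 and 0 ≤ k ≤ n − 1, the Sarkaria index of Σ_k(Δ_{n−1}) = {S ⊆ [n] : |S| ≤ k+1} equals 2k + 1 if 0 ≤ k ≤ (n−3)/2, equals n − 2 if (n−3)/2 < k ≤ n − 2, and equals n − 1 if k = n − 1. -/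
open scoped Classical

/-- The `k`-skeleton of the `(n−1)`-simplex, as an abstract simplicial
complex: all subsets of `[n]` of cardinality at most `k+1`. -/
noncomputable def simplexSkeleton (n k : ℕ) : Finset (Finset (Fin n)) :=
  Finset.univ.filter (fun τ : Finset (Fin n) => τ.card ≤ k + 1)


open Finset
namespace SindAux

/-- Parity of a finset under an involution equals parity of its fixed points. -/
theorem involution_parity {α : Type*} [DecidableEq α] (f : α → α) (s : Finset α)
    (hmem : ∀ a ∈ s, f a ∈ s) (hinv : ∀ a ∈ s, f (f a) = a) :
    ((s.filter fun a => f a = a).card : ZMod 2) = (s.card : ZMod 2) := by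
  induction s using Finset.strongInduction with
  | _ s ih =>
    rcases s.eq_empty_or_nonempty with rfl | ⟨a, ha⟩
    · simp
    · by_cases hfa : f a = a
      · have hsub : s.erase a ⊂ s := Finset.erase_ssubset ha
        have h1 : ∀ b ∈ s.erase a, f b ∈ s.erase a := by
          intro b hb
          rcases Finset.mem_erase.mp hb with ⟨hba, hbs⟩
          refine Finset.mem_erase.mpr ⟨fun h => hba ?_, hmem b hbs⟩
          have := hinv b hbs
          rw [h, hfa] at this; exact this.symm
        have h2 : ∀ b ∈ s.erase a, f (f b) = b := fun b hb =>
          hinv b (Finset.mem_of_mem_erase hb)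
        have key := ih (s.erase a) hsub h1 h2
        have hcf : (s.filter fun a => f a = a).card
            = ((s.erase a).filter fun a => f a = a).card + 1 := by
          rw [Finset.filter_erase]
          have haf : a ∈ s.filter fun a => f a = a := Finset.mem_filter.mpr ⟨ha, hfa⟩
          rw [Finset.card_erase_of_mem haf]
          have := Finset.card_pos.mpr ⟨a, haf⟩
          omega
        have hcs : s.card = (s.erase a).card + 1 := by
          rw [Finset.card_erase_of_mem ha]
          have := Finset.card_pos.mpr ⟨a, ha⟩
          omega
        rw [hcf, hcs]
        push_cast
        rw [key]
      · set t := (s.erase a).erase (f a) with ht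
        have hfas : f a ∈ s.erase a := Finset.mem_erase.mpr ⟨hfa, hmem a ha⟩
        have hsub : t ⊂ s :=
          lt_of_le_of_lt (show t ≤ s.erase a from Finset.erase_subset _ _) (Finset.erase_ssubset ha)
        have hmt : ∀ b ∈ t, b ∈ s := fun b hb =>
          Finset.mem_of_mem_erase (Finset.mem_of_mem_erase hb)
        have h1 : ∀ b ∈ t, f b ∈ t := by
          intro b hb
          have hbs := hmt b hb
          have hbfa : b ≠ f a := (Finset.mem_erase.mp hb).1
          have hba : b ≠ a := (Finset.mem_erase.mp (Finset.mem_of_mem_erase hb)).1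
          refine Finset.mem_erase.mpr ⟨?_, Finset.mem_erase.mpr ⟨?_, hmem b hbs⟩⟩
          · intro h
            apply hba
            have := hinv b hbs
            rw [h] at this
            rw [← this, hinv a ha]
          · intro h
            apply hbfa
            have := hinv b hbs
            rw [h] at this; exact this.symm
        have h2 : ∀ b ∈ t, f (f b) = b := fun b hb => hinv b (hmt b hb)
        have key := ih t hsub h1 h2
        have hcf : (s.filter fun a => f a = a) = t.filter fun a => f a = a := by
          have hafix : a ∉ (s.filter fun a => f a = a) := by
            intro h; exact hfa (Finset.mem_filter.mp h).2
          have hffix : f a ∉ (s.filter fun a => f a = a) := by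
            intro h
            have h2' := (Finset.mem_filter.mp h).2
            have h3 := hinv a ha
            exact hfa (h2'.symm.trans h3)
          rw [ht, Finset.filter_erase, Finset.filter_erase]
          rw [Finset.erase_eq_of_notMem (fun h => hffix (Finset.mem_of_mem_erase h)),
            Finset.erase_eq_of_notMem hafix]
        have hcs : s.card = t.card + 2 := by
          rw [ht, Finset.card_erase_of_mem hfas, Finset.card_erase_of_mem ha]
          have h3 : 0 < (s.erase a).card := Finset.card_pos.mpr ⟨f a, hfas⟩
          have h4 : (s.erase a).card < s.card := Finset.card_erase_lt_of_mem ha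
          omega
        rw [hcf, hcs, key]
        push_cast
        rw [show ((2:ZMod 2)) = 0 from by decide]
        ring

/-! ### Alternating sets of nonzero integers -/

/-- Rank of `v`: number of elements of `S` of smaller absolute value. -/
def rnk (S : Finset ℤ) (v : ℤ) : ℕ := (S.filter fun w => |w| < |v|).card

/-- `v` matches the "positively alternating" pattern in `S`. -/
def Mtch (S : Finset ℤ) (v : ℤ) : Prop := 0 < v ↔ Even (rnk S v)

def PosAlt (S : Finset ℤ) : Prop := ∀ v ∈ S, Mtch S v

def NegAlt (S : Finset ℤ) : Prop := ∀ v ∈ S, ¬ Mtch S v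

def Alt (S : Finset ℤ) : Prop := PosAlt S ∨ NegAlt S

/-- no two (possibly equal) elements are negatives of each other. -/
def NoPM (S : Finset ℤ) : Prop := ∀ v ∈ S, -v ∉ S

theorem NoPM.zero_not_mem {S : Finset ℤ} (h : NoPM S) : (0:ℤ) ∉ S := by
  intro h0
  exact h 0 h0 (by simpa using h0)

theorem NoPM.abs_inj {S : Finset ℤ} (h : NoPM S) {v w : ℤ} (hv : v ∈ S) (hw : w ∈ S)
    (habs : |v| = |w|) : v = w := by
  rcases abs_eq_abs.mp habs with h1 | h1
  · exact h1
  · exfalso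
    rw [h1] at hv
    exact h w hw hv

theorem NoPM.subset {S T : Finset ℤ} (h : NoPM S) (hsub : T ⊆ S) : NoPM T :=
  fun v hv hnv => h v (hsub hv) (hsub hnv)

theorem mtch_erase_iff {S : Finset ℤ} {x v : ℤ} (hx : x ∈ S) (hv : v ∈ S) :
    Mtch (S.erase x) v ↔ (if |x| < |v| then ¬ Mtch S v else Mtch S v) := by
  have hfe : (S.erase x).filter (fun w => |w| < |v|) = (S.filter fun w => |w| < |v|).erase x := by
    rw [Finset.filter_erase]
  by_cases hlt : |x| < |v|
  · have hxm : x ∈ S.filter fun w => |w| < |v| := Finset.mem_filter.mpr ⟨hx, hlt⟩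
    have hc : rnk (S.erase x) v = rnk S v - 1 := by
      unfold rnk; rw [hfe, Finset.card_erase_of_mem hxm]
    have hpos : 1 ≤ rnk S v := Finset.card_pos.mpr ⟨x, hxm⟩
    have hpar : Even (rnk (S.erase x) v) ↔ ¬ Even (rnk S v) := by
      rw [hc]
      rcases Nat.even_or_odd (rnk S v) with he | ho
      · simp only [he, not_true_eq_false, iff_false]
        rw [Nat.even_sub hpos]
        simp [he]
      · simp only [Nat.not_even_iff_odd.mpr ho, iff_true]
        rw [Nat.even_sub hpos]
        simp [Nat.not_even_iff_odd.mpr ho]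
    simp only [hlt, if_true]
    unfold Mtch
    rw [hpar]
    tauto
  · have hc : rnk (S.erase x) v = rnk S v := by
      unfold rnk
      rw [hfe, Finset.erase_eq_of_notMem]
      intro h; exact hlt (Finset.mem_filter.mp h).2
    simp only [hlt, if_false]
    unfold Mtch
    rw [hc]

theorem posAlt_erase_iff {S : Finset ℤ} (hno : NoPM S) {x : ℤ} (hx : x ∈ S) :
    PosAlt (S.erase x) ↔
      ((∀ v ∈ S, |v| < |x| → Mtch S v) ∧ (∀ v ∈ S, |x| < |v| → ¬ Mtch S v)) := by
  constructor
  · intro hpa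
    constructor
    · intro v hv hlt
      have hvx : v ≠ x := fun h => by rw [h] at hlt; exact lt_irrefl _ hlt
      have := hpa v (Finset.mem_erase.mpr ⟨hvx, hv⟩)
      rw [mtch_erase_iff hx hv] at this
      rwa [if_neg (not_lt.mpr hlt.le)] at this
    · intro v hv hlt
      have hvx : v ≠ x := fun h => by rw [h] at hlt; exact lt_irrefl _ hlt
      have := hpa v (Finset.mem_erase.mpr ⟨hvx, hv⟩)
      rw [mtch_erase_iff hx hv] at this
      rwa [if_pos hlt] at this
  · rintro ⟨h1, h2⟩ v hv
    rcases Finset.mem_erase.mp hv with ⟨hvx, hvS⟩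
    rw [mtch_erase_iff hx hvS]
    have habs : |v| ≠ |x| := fun h => hvx (hno.abs_inj hvS hx h)
    rcases lt_or_gt_of_ne habs with hlt | hgt
    · rw [if_neg (not_lt.mpr hlt.le)]
      exact h1 v hvS hlt
    · rw [if_pos hgt]
      exact h2 v hvS hgt

/-- Key counting lemma: the number of `x ∈ S` whose removal leaves a positively
alternating set is odd iff `S` is alternating. -/
theorem posAlt_erase_parity (S : Finset ℤ) (hS : S.Nonempty) (hno : NoPM S) :
    ((S.filter fun x => PosAlt (S.erase x)).card : ZMod 2)
      = if Alt S then 1 else 0 := by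
  classical
  set M := S.filter (fun v => Mtch S v) with hM
  by_cases hdc : ∀ v ∈ S, ∀ w ∈ S, |v| ≤ |w| → Mtch S w → Mtch S v
  · -- downward closed case
    by_cases hMS : M = S
    · -- PosAlt S
      have hpa : PosAlt S := by
        intro v hv
        have : v ∈ M := hMS ▸ hv
        exact (Finset.mem_filter.mp this).2
      obtain ⟨x₀, hx₀, hmax⟩ := S.exists_max_image (fun v => |v|) hS
      have hfilt : (S.filter fun x => PosAlt (S.erase x)) = {x₀} := by
        apply Finset.eq_singleton_iff_unique_mem.mpr
        constructor
        · refine Finset.mem_filter.mpr ⟨hx₀, (posAlt_erase_iff hno hx₀).mpr ⟨?_, ?_⟩⟩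
          · intro v hv _; exact hpa v hv
          · intro v hv hgt
            exact absurd (hmax v hv) (not_le.mpr hgt)
        · intro x hxf
          rcases Finset.mem_filter.mp hxf with ⟨hxS, hxp⟩
          rcases (posAlt_erase_iff hno hxS).mp hxp with ⟨_, h2⟩
          by_contra hne
          have habs : |x| ≠ |x₀| := fun h => hne (hno.abs_inj hxS hx₀ h)
          have hlt : |x| < |x₀| := lt_of_le_of_ne (hmax x hxS) habs
          exact h2 x₀ hx₀ hlt (hpa x₀ hx₀)
      rw [hfilt, if_pos (show Alt S from Or.inl hpa)]
      simp
    · by_cases hM0 : M = ∅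
      · -- NegAlt S
        have hna : NegAlt S := by
          intro v hv hm
          have : v ∈ M := Finset.mem_filter.mpr ⟨hv, hm⟩
          rw [hM0] at this; simp at this
        obtain ⟨x₀, hx₀, hmin⟩ := S.exists_min_image (fun v => |v|) hS
        have hfilt : (S.filter fun x => PosAlt (S.erase x)) = {x₀} := by
          apply Finset.eq_singleton_iff_unique_mem.mpr
          constructor
          · refine Finset.mem_filter.mpr ⟨hx₀, (posAlt_erase_iff hno hx₀).mpr ⟨?_, ?_⟩⟩
            · intro v hv hlt
              exact absurd (hmin v hv) (not_le.mpr hlt)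
            · intro v hv _; exact hna v hv
          · intro x hxf
            rcases Finset.mem_filter.mp hxf with ⟨hxS, hxp⟩
            rcases (posAlt_erase_iff hno hxS).mp hxp with ⟨h1, _⟩
            by_contra hne
            have habs : |x₀| ≠ |x| := fun h => hne (hno.abs_inj hxS hx₀ h.symm)
            have hlt : |x₀| < |x| := lt_of_le_of_ne (hmin x hxS) habs
            exact hna x₀ hx₀ (h1 x₀ hx₀ hlt)
        rw [hfilt, if_pos (show Alt S from Or.inr hna)]
        simp
      · -- M proper nonempty: two removals, RHS 0
        have hMne : M.Nonempty := Finset.nonempty_iff_ne_empty.mpr hM0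
        obtain ⟨b, hbS, hbM⟩ : ∃ b ∈ S, b ∉ M := by
          by_contra h
          push_neg at h
          exact hMS (Finset.Subset.antisymm (Finset.filter_subset _ _) h)
        obtain ⟨a, haM, hamax⟩ := M.exists_max_image (fun v => |v|) hMne
        have hCne : (S \ M).Nonempty := ⟨b, Finset.mem_sdiff.mpr ⟨hbS, hbM⟩⟩
        obtain ⟨c, hcC, hcmin⟩ := (S \ M).exists_min_image (fun v => |v|) hCne
        have haS : a ∈ S := (Finset.mem_filter.mp haM).1
        have haMtch : Mtch S a := (Finset.mem_filter.mp haM).2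
        have hcS : c ∈ S := (Finset.mem_sdiff.mp hcC).1
        have hcM : ¬ Mtch S c := by
          intro h
          exact (Finset.mem_sdiff.mp hcC).2 (Finset.mem_filter.mpr ⟨hcS, h⟩)
        have hac : a ≠ c := fun h => hcM (h ▸ haMtch)
        have hfilt : (S.filter fun x => PosAlt (S.erase x)) = {a, c} := by
          apply Finset.ext
          intro x
          simp only [Finset.mem_filter, Finset.mem_insert, Finset.mem_singleton]
          constructor
          · rintro ⟨hxS, hxp⟩
            rcases (posAlt_erase_iff hno hxS).mp hxp with ⟨h1, h2⟩
            by_cases hxM : Mtch S x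
            · left
              by_contra hne
              have habs : |x| ≠ |a| := fun h =>
                hne (hno.abs_inj hxS haS h)
              rcases lt_or_gt_of_ne habs with hlt | hgt
              · -- |x| < |a| : then a violates h2
                exact h2 a haS hlt haMtch
              · -- |a| < |x|: x bigger than max of M but x ∈ M
                have : x ∈ M := Finset.mem_filter.mpr ⟨hxS, hxM⟩
                exact absurd (hamax x this) (not_le.mpr hgt)
            · right
              by_contra hne
              have habs : |x| ≠ |c| := fun h => hne (hno.abs_inj hxS hcS h)
              rcases lt_or_gt_of_ne habs with hlt | hgt
              · have : x ∈ S \ M :=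
                  Finset.mem_sdiff.mpr ⟨hxS, fun h => hxM (Finset.mem_filter.mp h).2⟩
                exact absurd (hcmin x this) (not_le.mpr hlt)
              · exact absurd (h1 c hcS hgt) hcM
          · rintro (rfl | rfl)
            · refine ⟨haS, (posAlt_erase_iff hno haS).mpr ⟨?_, ?_⟩⟩
              · intro v hv hlt
                exact hdc v hv x haS hlt.le haMtch
              · intro v hv hgt hm
                have : v ∈ M := Finset.mem_filter.mpr ⟨hv, hm⟩
                exact absurd (hamax v this) (not_le.mpr hgt)
            · refine ⟨hcS, (posAlt_erase_iff hno hcS).mpr ⟨?_, ?_⟩⟩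
              · intro v hv hlt
                by_contra hm
                have : v ∈ S \ M :=
                  Finset.mem_sdiff.mpr ⟨hv, fun h => hm (Finset.mem_filter.mp h).2⟩
                exact absurd (hcmin v this) (not_le.mpr hlt)
              · intro v hv hgt hm
                exact hcM (hdc x hcS v hv hgt.le hm)
        have hRHS : ¬ Alt S := by
          rintro (hpa | hna)
          · exact hcM (hpa c hcS)
          · exact hna a haS haMtch
        rw [hfilt, if_neg hRHS]
        rw [Finset.card_insert_of_notMem (by simpa using hac), Finset.card_singleton]
        decide
  · -- not downward closed: empty filter, RHS 0
    push_neg at hdc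
    obtain ⟨v, hvS, w, hwS, hle, hw, hv⟩ := hdc
    have hfilt : (S.filter fun x => PosAlt (S.erase x)) = ∅ := by
      apply Finset.filter_false_of_mem
      intro x hxS hxp
      rcases (posAlt_erase_iff hno hxS).mp hxp with ⟨h1, h2⟩
      -- w must satisfy |w| ≤ |x|
      have hwx : |w| ≤ |x| := by
        by_contra h
        exact h2 w hwS (not_le.mp h) hw
      by_cases hvx : v = x
      · -- then |w| ≤ |v|, but also |v| ≤ |w|; so v = w
        rw [← hvx] at hwx
        exact hv (hno.abs_inj hvS hwS (le_antisymm hle hwx) ▸ hw)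
      · have habs : |v| ≠ |x| := fun h => hvx (hno.abs_inj hvS hxS h)
        have : |v| < |x| := lt_of_le_of_ne (hle.trans hwx) habs
        exact hv (h1 v hvS this)
    have hRHS : ¬ Alt S := by
      rintro (hpa | hna)
      · exact hv (hpa v hvS)
      · exact hna w hwS hw
    rw [hfilt, if_neg hRHS]
    simp


theorem image_succAbove_univ {n : ℕ} (i : Fin (n+1)) :
    (univ : Finset (Fin n)).image i.succAbove = univ.erase i := by
  ext t
  simp only [Finset.mem_image, Finset.mem_univ, true_and, Finset.mem_erase, and_true]
  constructor
  · rintro ⟨s, rfl⟩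
    exact Fin.succAbove_ne i s
  · intro ht
    exact (Fin.exists_succAbove_eq (Ne.symm (Ne.symm ht))).imp fun s hs => hs

theorem noPM_image {j : ℕ} {v : Fin j → ℤ} (hpm : ∀ t t', v t ≠ - v t') :
    NoPM ((univ : Finset (Fin j)).image v) := by
  intro x hx hnx
  rcases Finset.mem_image.mp hx with ⟨t, -, rfl⟩
  rcases Finset.mem_image.mp hnx with ⟨t', -, ht'⟩
  exact hpm t' t ht'

theorem facet_parity {n : ℕ} (v : Fin (n+1) → ℤ) (hpm : ∀ t t', v t ≠ - v t')
    (hno : NoPM ((univ : Finset (Fin (n+1))).image v)) :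
    (((univ : Finset (Fin (n+1))).filter fun i =>
        Function.Injective (v ∘ i.succAbove) ∧
          PosAlt ((univ : Finset (Fin n)).image (v ∘ i.succAbove))).card : ZMod 2)
      = if (Function.Injective v ∧ Alt ((univ : Finset (Fin (n+1))).image v)) then 1 else 0 := by
  have himg : ∀ i : Fin (n+1), (univ : Finset (Fin n)).image (v ∘ i.succAbove)
      = ((univ : Finset (Fin (n+1))).erase i).image v := by
    intro i
    rw [show v ∘ i.succAbove = v ∘ i.succAbove from rfl, ← Finset.image_image,
      image_succAbove_univ]
  by_cases hinj : Function.Injective v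
  · set S := (univ : Finset (Fin (n+1))).image v with hS
    have hSne : S.Nonempty := ⟨v 0, Finset.mem_image.mpr ⟨0, Finset.mem_univ _, rfl⟩⟩
    have himg2 : ∀ i : Fin (n+1),
        (univ : Finset (Fin n)).image (v ∘ i.succAbove) = S.erase (v i) := by
      intro i
      rw [himg i, hS, Finset.image_erase hinj]
    have hcard : ((univ : Finset (Fin (n+1))).filter fun i =>
        Function.Injective (v ∘ i.succAbove) ∧
          PosAlt ((univ : Finset (Fin n)).image (v ∘ i.succAbove))).card
        = (S.filter fun x => PosAlt (S.erase x)).card := by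
      apply Finset.card_bij (fun i _ => v i)
      · intro i hi
        rcases Finset.mem_filter.mp hi with ⟨-, -, hp⟩
        refine Finset.mem_filter.mpr ⟨Finset.mem_image.mpr ⟨i, Finset.mem_univ _, rfl⟩, ?_⟩
        rwa [himg2 i] at hp
      · intro a ha b hb h
        exact hinj h
      · intro x hx
        rcases Finset.mem_filter.mp hx with ⟨hxS, hxp⟩
        rcases Finset.mem_image.mp hxS with ⟨i, -, rfl⟩
        refine ⟨i, Finset.mem_filter.mpr ⟨Finset.mem_univ _, ?_, ?_⟩, rfl⟩
        · exact hinj.comp (Fin.succAbove_right_injective)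
        · rwa [himg2 i]
    rw [hcard, posAlt_erase_parity S hSne hno]
    by_cases hAlt : Alt S
    · rw [if_pos hAlt, if_pos ⟨hinj, hAlt⟩]
    · rw [if_neg hAlt, if_neg (fun h => hAlt h.2)]
  · rw [if_neg (fun h => hinj h.1)]
    set G := (univ : Finset (Fin (n+1))).filter fun i =>
        Function.Injective (v ∘ i.succAbove) ∧
          PosAlt ((univ : Finset (Fin n)).image (v ∘ i.succAbove)) with hG
    have hdup : ∀ i ∈ G, ∀ x y, x ≠ y → v x = v y → i = x ∨ i = y := by
      intro i hi x y hxy hvxy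
      rcases Finset.mem_filter.mp hi with ⟨-, hinj', -⟩
      by_contra hcon
      push_neg at hcon
      obtain ⟨a, ha⟩ := Fin.exists_succAbove_eq (Ne.symm hcon.1)
      obtain ⟨b, hb⟩ := Fin.exists_succAbove_eq (Ne.symm hcon.2)
      have hZ : a = b := hinj' (by simp only [Function.comp_apply, ha, hb]; exact hvxy)
      apply hxy
      rw [← ha, hZ, hb]
    rcases G.eq_empty_or_nonempty with hGe | ⟨i, hiG⟩
    · rw [hGe]; simp
    · obtain ⟨p, q, hvpq, hpq⟩ := Function.not_injective_iff.mp hinj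
      have hiPQ : i = p ∨ i = q := hdup i hiG p q hpq hvpq
      set j := if i = p then q else p with hj
      have hij : i ≠ j := by
        rcases hiPQ with rfl | rfl
        · rw [hj, if_pos rfl]; exact hpq
        · rw [hj]
          by_cases h : i = p
          · exact absurd h.symm hpq
          · rw [if_neg h]; exact h
      have hvij : v i = v j := by
        rcases hiPQ with rfl | rfl
        · rw [hj, if_pos rfl]; exact hvpq
        · rw [hj]
          by_cases h : i = p
          · exact absurd h.symm hpq
          · rw [if_neg h]; exact hvpq.symm
      -- the image of the deleted chain equals full image, for both i and j
      have himgfull : ∀ k k' : Fin (n+1), k ≠ k' → v k = v k' →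
          (univ : Finset (Fin n)).image (v ∘ k.succAbove)
            = (univ : Finset (Fin (n+1))).image v := by
        intro k k' hkk' hvkk'
        rw [himg k]
        apply Finset.Subset.antisymm
        · exact Finset.image_subset_image (Finset.erase_subset _ _)
        · intro x hx
          rcases Finset.mem_image.mp hx with ⟨t, -, rfl⟩
          by_cases htk : t = k
          · subst htk
            exact Finset.mem_image.mpr ⟨k', Finset.mem_erase.mpr ⟨Ne.symm hkk',
              Finset.mem_univ _⟩, hvkk'.symm⟩
          · exact Finset.mem_image.mpr ⟨t, Finset.mem_erase.mpr ⟨htk, Finset.mem_univ _⟩, rfl⟩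
      have hjG : j ∈ G := by
        rcases Finset.mem_filter.mp hiG with ⟨-, hinj', hpos⟩
        refine Finset.mem_filter.mpr ⟨Finset.mem_univ _, ?_, ?_⟩
        · -- injectivity of v ∘ j.succAbove
          intro a b hab
          by_contra hne
          have h1 : j.succAbove a ≠ j.succAbove b := fun h => hne (Fin.succAbove_right_injective h)
          have h2 := hdup i hiG _ _ h1 hab
          rcases h2 with h2 | h2
          · -- succAbove j a = i
            have h3 : v i = v (j.succAbove b) := h2 ▸ hab
            have h4 : v j = v (j.succAbove b) := hvij.symm ▸ h3
            have h5 : j ≠ j.succAbove b := (Fin.succAbove_ne j b).symm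
            rcases hdup i hiG _ _ h5 h4 with h6 | h6
            · exact hij h6
            · exact h1 (h2.symm.trans h6)
          · have h3 : v (j.succAbove a) = v i := h2 ▸ hab
            have h4 : v (j.succAbove a) = v j := h3.trans hvij
            have h5 : j.succAbove a ≠ j := Fin.succAbove_ne j a
            rcases hdup i hiG _ _ h5 h4 with h6 | h6
            · exact h1 (h6.symm.trans h2)
            · exact hij h6
        · rw [himgfull j i hij.symm hvij.symm]
          rwa [himgfull i j hij hvij] at hpos
      have hGij : G = {i, j} := by
        apply Finset.Subset.antisymm
        · intro k hk
          have h2 := hdup k hk p q hpq hvpq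
          simp only [Finset.mem_insert, Finset.mem_singleton]
          rcases hiPQ with rfl | rfl
          · rcases h2 with h2 | h2
            · left; exact h2
            · right; rw [hj, if_pos rfl]; exact h2
          · rcases h2 with h2 | h2
            · by_cases h : i = p
              · left; exact h2.trans h.symm
              · right; rw [hj, if_neg h]; exact h2
            · left; exact h2
        · intro k hk
          rcases Finset.mem_insert.mp hk with rfl | hk
          · exact hiG
          · rw [Finset.mem_singleton.mp hk]; exact hjG
      rw [hGij, Finset.card_insert_of_notMem (by simpa using hij), Finset.card_singleton]
      decide


section Flags
variable {ι : Type*} [DecidableEq ι] [Fintype ι]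

/-- The `i`-th pair of the chain encoded by a signed sequence. -/
def pairAt {j : ℕ} (σ : Fin j → ι × Bool) (i : Fin j) : Finset ι × Finset ι :=
  ((univ.filter fun t => t ≤ i ∧ (σ t).2 = true).image fun t => (σ t).1,
   (univ.filter fun t => t ≤ i ∧ (σ t).2 = false).image fun t => (σ t).1)

/-- A full flag over `U`. -/
def IsFlagF (U : Finset ι) {j : ℕ} (σ : Fin j → ι × Bool) : Prop :=
  Function.Injective (fun t => (σ t).1) ∧ univ.image (fun t => (σ t).1) = U

/-- values of the labelling along the chain. -/
def vF (lam : Finset ι × Finset ι → ℤ) {j : ℕ} (σ : Fin j → ι × Bool) (i : Fin j) : ℤ :=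
  lam (pairAt σ i)

def PAFlag (lam : Finset ι × Finset ι → ℤ) {j : ℕ} (σ : Fin j → ι × Bool) : Prop :=
  Function.Injective (vF lam σ) ∧ PosAlt (univ.image (vF lam σ))

def NAFlag (lam : Finset ι × Finset ι → ℤ) {j : ℕ} (σ : Fin j → ι × Bool) : Prop :=
  Function.Injective (vF lam σ) ∧ NegAlt (univ.image (vF lam σ))

def AltFlag (lam : Finset ι × Finset ι → ℤ) {j : ℕ} (σ : Fin j → ι × Bool) : Prop :=
  Function.Injective (vF lam σ) ∧ Alt (univ.image (vF lam σ))

theorem pairAt_congr {j : ℕ} {σ σ' : Fin j → ι × Bool} {i : Fin j}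
    (h : ∀ t, t ≤ i → σ t = σ' t) : pairAt σ i = pairAt σ' i := by
  unfold pairAt
  have : ∀ b : Bool, ((univ.filter fun t => t ≤ i ∧ (σ t).2 = b).image fun t => (σ t).1)
      = ((univ.filter fun t => t ≤ i ∧ (σ' t).2 = b).image fun t => (σ' t).1) := by
    intro b
    ext x
    simp only [Finset.mem_image, Finset.mem_filter, Finset.mem_univ, true_and]
    constructor
    · rintro ⟨t, ⟨ht, hb⟩, rfl⟩
      exact ⟨t, ⟨ht, by rw [← h t ht]; exact hb⟩, by rw [← h t ht]⟩
    · rintro ⟨t, ⟨ht, hb⟩, rfl⟩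
      exact ⟨t, ⟨ht, by rw [h t ht]; exact hb⟩, by rw [h t ht]⟩
  rw [Prod.ext_iff]
  exact ⟨this true, this false⟩

theorem pairAt_perm {j : ℕ} (σ : Fin j → ι × Bool) (e : Equiv.Perm (Fin j)) {i : Fin j}
    (he : ∀ t, e t ≤ i ↔ t ≤ i) : pairAt (σ ∘ e) i = pairAt σ i := by
  unfold pairAt
  have : ∀ b : Bool, ((univ.filter fun t => t ≤ i ∧ ((σ ∘ e) t).2 = b).image fun t => ((σ ∘ e) t).1)
      = ((univ.filter fun t => t ≤ i ∧ (σ t).2 = b).image fun t => (σ t).1) := by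
    intro b
    ext x
    simp only [Finset.mem_image, Finset.mem_filter, Finset.mem_univ, true_and,
      Function.comp_apply]
    constructor
    · rintro ⟨t, ⟨ht, hb⟩, rfl⟩
      exact ⟨e t, ⟨(he t).mpr ht, hb⟩, rfl⟩
    · rintro ⟨t, ⟨ht, hb⟩, rfl⟩
      refine ⟨e.symm t, ⟨?_, ?_⟩, ?_⟩
      · have := (he (e.symm t))
        rw [Equiv.apply_symm_apply] at this
        exact this.mp ht
      · simpa using hb
      · simp
  rw [Prod.ext_iff]
  exact ⟨this true, this false⟩

theorem pairAt_disjoint {j : ℕ} {σ : Fin j → ι × Bool}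
    (hinj : Function.Injective (fun t => (σ t).1)) (i : Fin j) :
    Disjoint (pairAt σ i).1 (pairAt σ i).2 := by
  rw [Finset.disjoint_left]
  intro x hx1 hx2
  rcases Finset.mem_image.mp hx1 with ⟨t, ht, rfl⟩
  rcases Finset.mem_image.mp hx2 with ⟨t', ht', he⟩
  have : t' = t := hinj he
  rw [this] at ht'
  rcases Finset.mem_filter.mp ht with ⟨-, -, h1⟩
  rcases Finset.mem_filter.mp ht' with ⟨-, -, h2⟩
  rw [h1] at h2
  simp at h2

theorem pairAt_nonempty {j : ℕ} (σ : Fin j → ι × Bool) (i : Fin j) :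
    (pairAt σ i).1.Nonempty ∨ (pairAt σ i).2.Nonempty := by
  rcases Bool.eq_false_or_eq_true (σ i).2 with hb | hb
  · left
    exact ⟨(σ i).1, Finset.mem_image.mpr ⟨i, Finset.mem_filter.mpr
      ⟨Finset.mem_univ _, le_refl _, hb⟩, rfl⟩⟩
  · right
    exact ⟨(σ i).1, Finset.mem_image.mpr ⟨i, Finset.mem_filter.mpr
      ⟨Finset.mem_univ _, le_refl _, hb⟩, rfl⟩⟩

theorem pairAt_mono {j : ℕ} (σ : Fin j → ι × Bool) {i i' : Fin j} (h : i ≤ i') :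
    (pairAt σ i).1 ⊆ (pairAt σ i').1 ∧ (pairAt σ i).2 ⊆ (pairAt σ i').2 := by
  constructor <;>
  · apply Finset.image_subset_image
    intro t ht
    rcases Finset.mem_filter.mp ht with ⟨h1, h2, h3⟩
    exact Finset.mem_filter.mpr ⟨h1, h2.trans h, h3⟩

theorem pairAt_neg {j : ℕ} (σ : Fin j → ι × Bool) (i : Fin j) :
    pairAt (fun t => ((σ t).1, !(σ t).2)) i = ((pairAt σ i).2, (pairAt σ i).1) := by
  unfold pairAt
  rw [Prod.ext_iff]
  constructor <;>
  · dsimp only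
    congr 1
    ext t
    simp only [Finset.mem_filter, Finset.mem_univ, true_and, Bool.not_eq_true',
      Bool.not_eq_false']

/-- Values along a chain of a labelling with no complementary edge contain no `±` pair. -/
theorem vF_noPM {j : ℕ} (lam : Finset ι × Finset ι → ℤ)
    (hedge : ∀ p q : Finset ι × Finset ι, Disjoint q.1 q.2 → p.1 ⊆ q.1 → p.2 ⊆ q.2 →
      (p.1.Nonempty ∨ p.2.Nonempty) → lam q ≠ - lam p)
    {σ : Fin j → ι × Bool} (hinj : Function.Injective (fun t => (σ t).1)) :
    ∀ t t', vF lam σ t ≠ - vF lam σ t' := by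
  have key : ∀ t t' : Fin j, t ≤ t' → vF lam σ t' ≠ - vF lam σ t := by
    intro t t' htt
    exact hedge (pairAt σ t) (pairAt σ t') (pairAt_disjoint hinj t')
      (pairAt_mono σ htt).1 (pairAt_mono σ htt).2 (pairAt_nonempty σ t)
  intro t t' h
  rcases le_total t' t with hle | hle
  · exact key t' t hle h
  · apply key t t' hle
    rw [h, neg_neg]

end Flags

section Lemmas
variable {ι : Type*} [DecidableEq ι] [Fintype ι]

theorem rnk_image_neg (S : Finset ℤ) (v : ℤ) :
    rnk (S.image fun x => -x) (-v) = rnk S v := by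
  unfold rnk
  have h : (S.image fun x => -x).filter (fun w => |w| < |(-v)|)
      = (S.filter fun w => |w| < |v|).image (fun x => -x) := by
    ext x
    simp only [Finset.mem_filter, Finset.mem_image, abs_neg]
    constructor
    · rintro ⟨⟨y, hy, rfl⟩, hlt⟩
      exact ⟨y, ⟨hy, by rwa [abs_neg] at hlt⟩, rfl⟩
    · rintro ⟨y, ⟨hy, hlt⟩, rfl⟩
      exact ⟨⟨y, hy, rfl⟩, by rwa [abs_neg]⟩
  rw [h, Finset.card_image_of_injective _ neg_injective]

theorem mtch_image_neg {S : Finset ℤ} {v : ℤ} (hv0 : v ≠ 0) :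
    (Mtch (S.image fun x => -x) (-v) ↔ ¬ Mtch S v) := by
  unfold Mtch
  rw [rnk_image_neg]
  have h1 : 0 < -v ↔ ¬ 0 < v := by
    constructor
    · intro h h'; omega
    · intro h; omega
  rw [h1]
  tauto

theorem negAlt_image_neg {S : Finset ℤ} (h0 : (0:ℤ) ∉ S) :
    NegAlt (S.image fun x => -x) ↔ PosAlt S := by
  constructor
  · intro h v hv
    have hv0 : v ≠ 0 := fun he => h0 (he ▸ hv)
    have := h (-v) (Finset.mem_image.mpr ⟨v, hv, rfl⟩)
    rw [mtch_image_neg hv0] at this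
    tauto
  · intro h w hw
    rcases Finset.mem_image.mp hw with ⟨v, hv, rfl⟩
    have hv0 : v ≠ 0 := fun he => h0 (he ▸ hv)
    rw [mtch_image_neg hv0]
    intro hc; exact hc (h v hv)

theorem posAlt_image_neg {S : Finset ℤ} (h0 : (0:ℤ) ∉ S) :
    PosAlt (S.image fun x => -x) ↔ NegAlt S := by
  constructor
  · intro h v hv
    have hv0 : v ≠ 0 := fun he => h0 (he ▸ hv)
    have := h (-v) (Finset.mem_image.mpr ⟨v, hv, rfl⟩)
    rwa [mtch_image_neg hv0] at this
  · intro h w hw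
    rcases Finset.mem_image.mp hw with ⟨v, hv, rfl⟩
    have hv0 : v ≠ 0 := fun he => h0 (he ▸ hv)
    rw [mtch_image_neg hv0]
    exact h v hv

theorem swap_le_iff {n : ℕ} (a : Fin (n+1)) (h : a ≠ Fin.last n) {t : Fin (n+1)}
    (ht : t ≠ a) (s : Fin (n+1)) :
    Equiv.swap a ((a.castPred h).succ) s ≤ t ↔ s ≤ t := by
  set b := (a.castPred h).succ with hb
  have hab : (a : ℕ) + 1 = (b : ℕ) := by
    rw [hb, Fin.val_succ, Fin.coe_castPred]
  rcases eq_or_ne s a with rfl | h1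
  · rw [Equiv.swap_apply_left]
    rw [Fin.le_def, Fin.le_def]
    have hta : (t : ℕ) ≠ (s : ℕ) := fun hc => ht (Fin.val_injective hc)
    omega
  · rcases eq_or_ne s b with rfl | h2
    · rw [Equiv.swap_apply_right]
      rw [Fin.le_def, Fin.le_def]
      have hta : (t : ℕ) ≠ (a : ℕ) := fun hc => ht (Fin.val_injective hc)
      omega
    · rw [Equiv.swap_apply_of_ne_of_ne h1 h2]

/-- `ν`: flip all signs. -/
def nu {j : ℕ} (σ : Fin j → ι × Bool) : Fin j → ι × Bool := fun t => ((σ t).1, !(σ t).2)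

theorem nu_nu {j : ℕ} (σ : Fin j → ι × Bool) : nu (nu σ) = σ := by
  funext t
  simp [nu]

theorem isFlagF_nu {U : Finset ι} {j : ℕ} {σ : Fin j → ι × Bool} (h : IsFlagF U σ) :
    IsFlagF U (nu σ) := h

theorem vF_nu (lam : Finset ι × Finset ι → ℤ)
    (hanti : ∀ p : Finset ι × Finset ι, Disjoint p.1 p.2 → lam (p.2, p.1) = - lam p)
    {j : ℕ} {σ : Fin j → ι × Bool} (hinj : Function.Injective (fun t => (σ t).1)) :
    vF lam (nu σ) = fun t => - vF lam σ t := by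
  funext t
  unfold vF nu
  rw [pairAt_neg σ t]
  exact hanti (pairAt σ t) (pairAt_disjoint hinj t)

theorem paFlag_nu_iff (lam : Finset ι × Finset ι → ℤ)
    (hanti : ∀ p : Finset ι × Finset ι, Disjoint p.1 p.2 → lam (p.2, p.1) = - lam p)
    {j : ℕ} {σ : Fin j → ι × Bool} (hinj : Function.Injective (fun t => (σ t).1))
    (hno : NoPM (univ.image (vF lam σ))) :
    (PAFlag lam (nu σ) ↔ NAFlag lam σ) ∧ (NAFlag lam (nu σ) ↔ PAFlag lam σ) := by
  have h0 : (0:ℤ) ∉ univ.image (vF lam σ) := by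
    intro hc
    exact hno 0 hc (by simpa using hc)
  have hvf : vF lam (nu σ) = fun t => - vF lam σ t := vF_nu lam hanti hinj
  have himg : univ.image (vF lam (nu σ)) = (univ.image (vF lam σ)).image (fun x => -x) := by
    rw [hvf, Finset.image_image]
    rfl
  have hinj2 : Function.Injective (vF lam (nu σ)) ↔ Function.Injective (vF lam σ) := by
    rw [hvf]
    constructor
    · intro h x y hxy
      exact h (by simp [hxy])
    · intro h x y hxy
      simp only [neg_inj] at hxy
      exact h hxy
  constructor
  · unfold PAFlag NAFlag
    rw [hinj2, himg, posAlt_image_neg h0]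
  · unfold PAFlag NAFlag
    rw [hinj2, himg, negAlt_image_neg h0]

theorem altFlag_nu_iff (lam : Finset ι × Finset ι → ℤ)
    (hanti : ∀ p : Finset ι × Finset ι, Disjoint p.1 p.2 → lam (p.2, p.1) = - lam p)
    {j : ℕ} {σ : Fin j → ι × Bool} (hinj : Function.Injective (fun t => (σ t).1))
    (hno : NoPM (univ.image (vF lam σ))) :
    AltFlag lam (nu σ) ↔ AltFlag lam σ := by
  obtain ⟨h1, h2⟩ := paFlag_nu_iff lam hanti hinj hno
  have e1 : AltFlag lam (nu σ) ↔ (PAFlag lam (nu σ) ∨ NAFlag lam (nu σ)) :=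
    and_or_left
  have e2 : AltFlag lam σ ↔ (PAFlag lam σ ∨ NAFlag lam σ) :=
    and_or_left
  rw [e1, h1, h2, e2]
  exact or_comm

theorem isFlagF_perm {U : Finset ι} {j : ℕ} {σ : Fin j → ι × Bool} (h : IsFlagF U σ)
    (e : Equiv.Perm (Fin j)) : IsFlagF U (σ ∘ e) := by
  obtain ⟨hinj, himg⟩ := h
  constructor
  · intro a b hab
    exact e.injective (hinj hab)
  · rw [← himg]
    ext x
    simp only [Finset.mem_image, Finset.mem_univ, true_and, Function.comp_apply]
    constructor
    · rintro ⟨t, rfl⟩; exact ⟨e t, rfl⟩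
    · rintro ⟨t, rfl⟩; exact ⟨e.symm t, by simp⟩

theorem pairAt_castSucc {n : ℕ} (σ : Fin (n+1) → ι × Bool) (t : Fin n) :
    pairAt (σ ∘ Fin.castSucc) t = pairAt σ t.castSucc := by
  unfold pairAt
  have key : ∀ b : Bool,
      ((univ.filter fun s : Fin n => s ≤ t ∧ ((σ ∘ Fin.castSucc) s).2 = b).image
        fun s => ((σ ∘ Fin.castSucc) s).1)
      = ((univ.filter fun s : Fin (n+1) => s ≤ t.castSucc ∧ (σ s).2 = b).image
        fun s => (σ s).1) := by
    intro b
    ext x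
    simp only [Finset.mem_image, Finset.mem_filter, Finset.mem_univ, true_and,
      Function.comp_apply]
    constructor
    · rintro ⟨s, ⟨hs, hb⟩, rfl⟩
      exact ⟨s.castSucc, ⟨Fin.castSucc_le_castSucc_iff.mpr hs, hb⟩, rfl⟩
    · rintro ⟨s, ⟨hs, hb⟩, rfl⟩
      have hsne : s ≠ Fin.last n := by
        intro hc
        rw [hc] at hs
        exact absurd (lt_of_le_of_lt hs (Fin.castSucc_lt_last t))
          (lt_irrefl _)
      obtain ⟨s', rfl⟩ := Fin.exists_castSucc_eq.mpr hsne
      exact ⟨s', ⟨Fin.castSucc_le_castSucc_iff.mp hs, hb⟩, rfl⟩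
  rw [Prod.ext_iff]
  exact ⟨key true, key false⟩

end Lemmas

section Fan
variable {ι : Type*} [DecidableEq ι] [Fintype ι]

theorem snoc_fst {n : ℕ} (τ : Fin n → ι × Bool) (y : ι × Bool) :
    (fun t => ((Fin.snoc τ y : Fin (n+1) → ι × Bool) t).1)
      = Fin.snoc (fun s => (τ s).1) y.1 := by
  funext t
  rcases eq_or_ne t (Fin.last n) with rfl | h
  · rw [Fin.snoc_last, Fin.snoc_last]
  · obtain ⟨s, rfl⟩ := Fin.exists_castSucc_eq.mpr h
    rw [Fin.snoc_castSucc, Fin.snoc_castSucc]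

theorem vF_castSucc {n : ℕ} (lam : Finset ι × Finset ι → ℤ) (σ : Fin (n+1) → ι × Bool) :
    vF lam (σ ∘ Fin.castSucc) = vF lam σ ∘ (Fin.last n).succAbove := by
  funext r
  show lam (pairAt (σ ∘ Fin.castSucc) r) = lam (pairAt σ ((Fin.last n).succAbove r))
  rw [pairAt_castSucc, Fin.succAbove_last]

theorem update_last_fst {n : ℕ} (σ : Fin (n+1) → ι × Bool) (b : Bool) :
    (fun t => ((Function.update σ (Fin.last n) ((σ (Fin.last n)).1, b)) t).1)
      = fun t => (σ t).1 := by
  funext t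
  rcases eq_or_ne t (Fin.last n) with rfl | h
  · rw [Function.update_self]
  · rw [Function.update_of_ne h]

theorem pairAt_update_last {n : ℕ} (σ : Fin (n+1) → ι × Bool) (b : Bool) (r : Fin n) :
    pairAt (Function.update σ (Fin.last n) ((σ (Fin.last n)).1, b)) r.castSucc
      = pairAt σ r.castSucc := by
  apply pairAt_congr
  intro s hs
  have : s ≠ Fin.last n := by
    intro hc
    rw [hc] at hs
    exact absurd (lt_of_le_of_lt hs (Fin.castSucc_lt_last r)) (lt_irrefl _)
  rw [Function.update_of_ne this]

theorem fan (lam : Finset ι × Finset ι → ℤ)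
    (hanti : ∀ p : Finset ι × Finset ι, Disjoint p.1 p.2 → lam (p.2, p.1) = - lam p)
    (hedge : ∀ p q : Finset ι × Finset ι, Disjoint q.1 q.2 → p.1 ⊆ q.1 → p.2 ⊆ q.2 →
      (p.1.Nonempty ∨ p.2.Nonempty) → lam q ≠ - lam p) :
    ∀ (n : ℕ) (U : Finset ι), U.card = n →
      (((univ : Finset (Fin n → ι × Bool)).filter
          fun σ => IsFlagF U σ ∧ PAFlag lam σ).card : ZMod 2) = 1 := by
  intro n
  induction n with
  | zero =>
    intro U hU
    rw [Finset.card_eq_zero] at hU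
    subst hU
    have hall : ((univ : Finset (Fin 0 → ι × Bool)).filter
        fun σ => IsFlagF ∅ σ ∧ PAFlag lam σ) = univ := by
      rw [Finset.filter_eq_self]
      intro σ _
      refine ⟨⟨fun a => a.elim0, ?_⟩, fun a => a.elim0, fun v hv => ?_⟩
      · ext x
        simp
      · simp at hv
    rw [hall, Finset.card_univ]
    have h1 : Fintype.card (Fin 0 → ι × Bool) = 1 := by
      rw [Fintype.card_fun]
      simp
    rw [h1, Nat.cast_one]
  | succ n IH =>
    intro U hU
    have hupos : 0 < U.card := by omega
    obtain ⟨u, hu⟩ := Finset.card_pos.mp hupos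
    have hU' : (U.erase u).card = n := by
      rw [Finset.card_erase_of_mem hu]
      omega
    set KF : (Fin (n+1) → ι × Bool) → Prop := fun σ => ∀ t, (σ t).1 = u → (σ t).2 = true
      with hKF
    set PD : (Fin (n+1) → ι × Bool) → Fin (n+1) → Prop := fun σ i =>
      Function.Injective (vF lam σ ∘ i.succAbove) ∧
        PosAlt ((univ : Finset (Fin n)).image (vF lam σ ∘ i.succAbove)) with hPD
    have hNo : ∀ σ : Fin (n+1) → ι × Bool, Function.Injective (fun t => (σ t).1) →
        NoPM (univ.image (vF lam σ)) := fun σ h => noPM_image (vF_noPM lam hedge h)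
    set A := (univ : Finset (Fin (n+1) → ι × Bool)).filter
      (fun σ => IsFlagF U σ ∧ PAFlag lam σ) with hA
    set N' := (univ : Finset (Fin (n+1) → ι × Bool)).filter
      (fun σ => IsFlagF U σ ∧ NAFlag lam σ) with hN
    set L := (univ : Finset (Fin (n+1) → ι × Bool)).filter
      (fun σ => IsFlagF U σ ∧ AltFlag lam σ) with hL
    set B := (univ : Finset (Fin (n+1) → ι × Bool)).filter
      (fun σ => IsFlagF U σ ∧ KF σ ∧ AltFlag lam σ) with hB
    set Bn := (univ : Finset (Fin (n+1) → ι × Bool)).filter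
      (fun σ => IsFlagF U σ ∧ ¬ KF σ ∧ AltFlag lam σ) with hBn
    -- step 1 : L = A ∪ N'
    have hLsplit : L.card = A.card + N'.card := by
      have hunion : L = A ∪ N' := by
        rw [hL, hA, hN, ← Finset.filter_or]
        apply Finset.filter_congr
        intro σ _
        unfold AltFlag PAFlag NAFlag Alt
        tauto
      have hdisj : Disjoint A N' := by
        rw [Finset.disjoint_left]
        intro σ hσA hσN
        rcases Finset.mem_filter.mp hσA with ⟨-, -, -, hP⟩
        rcases Finset.mem_filter.mp hσN with ⟨-, -, -, hNn⟩
        have hv : vF lam σ 0 ∈ univ.image (vF lam σ) :=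
          Finset.mem_image.mpr ⟨0, Finset.mem_univ _, rfl⟩
        exact hNn _ hv (hP _ hv)
      rw [hunion, Finset.card_union_of_disjoint hdisj]
    -- step 2 : A ↔ N' via nu
    have hAN : A.card = N'.card := by
      apply Finset.card_bij (fun σ _ => nu σ)
      · intro σ hσ
        rcases Finset.mem_filter.mp hσ with ⟨-, hflag, hP⟩
        refine Finset.mem_filter.mpr ⟨Finset.mem_univ _, isFlagF_nu hflag, ?_⟩
        exact ((paFlag_nu_iff lam hanti hflag.1 (hNo σ hflag.1)).2).mpr hP
      · intro σ hσ σ' hσ' h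
        have := congrArg nu h
        rwa [nu_nu, nu_nu] at this
      · intro τ hτ
        rcases Finset.mem_filter.mp hτ with ⟨-, hflag, hNn⟩
        refine ⟨nu τ, Finset.mem_filter.mpr ⟨Finset.mem_univ _, isFlagF_nu hflag, ?_⟩, nu_nu τ⟩
        exact ((paFlag_nu_iff lam hanti hflag.1 (hNo τ hflag.1)).1).mpr hNn
    -- step 3 : L = B ∪ Bn
    have hLsplit2 : L.card = B.card + Bn.card := by
      have hunion : L = B ∪ Bn := by
        rw [hL, hB, hBn, ← Finset.filter_or]
        apply Finset.filter_congr
        intro σ _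
        by_cases h : KF σ <;> tauto
      have hdisj : Disjoint B Bn := by
        rw [Finset.disjoint_left]
        intro σ hσA hσN
        rcases Finset.mem_filter.mp hσA with ⟨-, -, hk, -⟩
        rcases Finset.mem_filter.mp hσN with ⟨-, -, hnk, -⟩
        exact hnk hk
      rw [hunion, Finset.card_union_of_disjoint hdisj]
    -- step 4 : B ↔ Bn via nu
    have hKFnu1 : ∀ σ : Fin (n+1) → ι × Bool, IsFlagF U σ → KF σ → ¬ KF (nu σ) := by
      intro σ hflag hk hknu
      have : u ∈ univ.image (fun t => (σ t).1) := hflag.2.symm ▸ hu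
      rcases Finset.mem_image.mp this with ⟨t₀, -, ht₀⟩
      have h1 : (σ t₀).2 = true := hk t₀ ht₀
      have h2 : ((nu σ) t₀).2 = true := hknu t₀ ht₀
      rw [show ((nu σ) t₀).2 = !(σ t₀).2 from rfl, h1] at h2
      simp at h2
    have hKFnu2 : ∀ σ : Fin (n+1) → ι × Bool, IsFlagF U σ → ¬ KF σ → KF (nu σ) := by
      intro σ hflag hnk
      have hnk' : ∃ t, (σ t).1 = u ∧ (σ t).2 ≠ true := by
        by_contra hc
        push_neg at hc
        exact hnk hc
      obtain ⟨t₀, ht₀, hsnd⟩ := hnk'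
      have hsnd' : (σ t₀).2 = false := by
        revert hsnd
        cases (σ t₀).2 <;> simp
      intro t ht
      have : t = t₀ := hflag.1 (ht.trans ht₀.symm)
      subst this
      rw [show ((nu σ) t).2 = !(σ t).2 from rfl, hsnd']
      rfl
    have hBBn : B.card = Bn.card := by
      apply Finset.card_bij (fun σ _ => nu σ)
      · intro σ hσ
        rcases Finset.mem_filter.mp hσ with ⟨-, hflag, hk, hAlt⟩
        refine Finset.mem_filter.mpr ⟨Finset.mem_univ _, isFlagF_nu hflag,
          hKFnu1 σ hflag hk, ?_⟩
        exact (altFlag_nu_iff lam hanti hflag.1 (hNo σ hflag.1)).mpr hAlt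
      · intro σ hσ σ' hσ' h
        have := congrArg nu h
        rwa [nu_nu, nu_nu] at this
      · intro τ hτ
        rcases Finset.mem_filter.mp hτ with ⟨-, hflag, hnk, hAlt⟩
        refine ⟨nu τ, Finset.mem_filter.mpr ⟨Finset.mem_univ _, isFlagF_nu hflag, ?_, ?_⟩,
          nu_nu τ⟩
        · exact hKFnu2 τ hflag hnk
        · exact (altFlag_nu_iff lam hanti hflag.1 (hNo τ hflag.1)).mpr hAlt
    have hAB : A.card = B.card := by omega
    -- step 6 : fiberwise count + per-facet parity
    set SP := (univ : Finset ((Fin (n+1) → ι × Bool) × Fin (n+1))).filter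
      (fun x => IsFlagF U x.1 ∧ KF x.1 ∧ PD x.1 x.2) with hSP
    set BF := (univ : Finset (Fin (n+1) → ι × Bool)).filter
      (fun σ => IsFlagF U σ ∧ KF σ) with hBF
    have hfib : SP.card
        = ∑ σ ∈ BF, (((univ : Finset (Fin (n+1))).filter fun i => PD σ i)).card := by
      rw [Finset.card_eq_sum_card_fiberwise (f := Prod.fst) (t := BF)
        (fun x hx => by
          rcases Finset.mem_filter.mp hx with ⟨-, h1, h2, -⟩
          exact Finset.mem_filter.mpr ⟨Finset.mem_univ _, h1, h2⟩)]
      apply Finset.sum_congr rfl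
      intro σ hσ
      apply Finset.card_bij (fun x _ => x.2)
      · intro x hx
        rcases Finset.mem_filter.mp hx with ⟨hx1, hx2⟩
        rcases Finset.mem_filter.mp hx1 with ⟨-, -, -, hpd⟩
        refine Finset.mem_filter.mpr ⟨Finset.mem_univ _, ?_⟩
        rwa [hx2] at hpd
      · intro x hx y hy hxy
        rcases Finset.mem_filter.mp hx with ⟨-, hx2⟩
        rcases Finset.mem_filter.mp hy with ⟨-, hy2⟩
        exact Prod.ext (hx2.trans hy2.symm) hxy
      · intro i hi
        rcases Finset.mem_filter.mp hi with ⟨-, hpd⟩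
        rcases Finset.mem_filter.mp hσ with ⟨-, h1, h2⟩
        exact ⟨(σ, i), Finset.mem_filter.mpr
          ⟨Finset.mem_filter.mpr ⟨Finset.mem_univ _, h1, h2, hpd⟩, rfl⟩, rfl⟩
    have hSpB : (SP.card : ZMod 2) = (B.card : ZMod 2) := by
      have hper : ∀ σ ∈ BF,
          ((((univ : Finset (Fin (n+1))).filter fun i => PD σ i)).card : ZMod 2)
            = if AltFlag lam σ then 1 else 0 := by
        intro σ hσ
        rcases Finset.mem_filter.mp hσ with ⟨-, hflag, -⟩
        have h1 := facet_parity (vF lam σ) (vF_noPM lam hedge hflag.1) (hNo σ hflag.1)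
        simp only [hPD]
        unfold AltFlag
        convert h1 using 2
      have hBFB : BF.filter (fun σ => AltFlag lam σ) = B := by
        rw [hBF, Finset.filter_filter, hB]
        apply Finset.filter_congr
        intro σ _
        tauto
      calc (SP.card : ZMod 2)
          = ∑ σ ∈ BF, ((((univ : Finset (Fin (n+1))).filter fun i => PD σ i)).card : ZMod 2) := by
            rw [hfib]; push_cast; rfl
        _ = ∑ σ ∈ BF, (if AltFlag lam σ then 1 else 0) := Finset.sum_congr rfl hper
        _ = ((BF.filter (fun σ => AltFlag lam σ)).card : ZMod 2) := Finset.sum_boole _ _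
        _ = (B.card : ZMod 2) := by rw [hBFB]
    -- step 7 : the pivot involution
    set ψ : ((Fin (n+1) → ι × Bool) × Fin (n+1)) → ((Fin (n+1) → ι × Bool) × Fin (n+1)) :=
      fun x => if h : x.2 = Fin.last n then
          (if (x.1 x.2).1 = u then x
           else (Function.update x.1 (Fin.last n) ((x.1 (Fin.last n)).1, !(x.1 (Fin.last n)).2),
             x.2))
        else (x.1 ∘ Equiv.swap x.2 ((x.2.castPred h).succ), x.2) with hψ
    have hψ1 : ∀ (σ : Fin (n+1) → ι × Bool) (i : Fin (n+1)) (h : i = Fin.last n),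
        (σ i).1 = u → ψ (σ, i) = (σ, i) := by
      intro σ i h hfst
      simp only [hψ]
      rw [dif_pos h, if_pos hfst]
    have hψ2 : ∀ (σ : Fin (n+1) → ι × Bool) (i : Fin (n+1)) (h : i = Fin.last n),
        (σ i).1 ≠ u → ψ (σ, i)
          = (Function.update σ (Fin.last n) ((σ (Fin.last n)).1, !(σ (Fin.last n)).2), i) := by
      intro σ i h hfst
      simp only [hψ]
      rw [dif_pos h, if_neg hfst]
    have hψ3 : ∀ (σ : Fin (n+1) → ι × Bool) (i : Fin (n+1)) (h : i ≠ Fin.last n),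
        ψ (σ, i) = (σ ∘ Equiv.swap i ((i.castPred h).succ), i) := by
      intro σ i h
      simp only [hψ]
      rw [dif_neg h]
    have hmaps : ∀ x ∈ SP, ψ x ∈ SP := by
      rintro ⟨σ, i⟩ hx
      rcases Finset.mem_filter.mp hx with ⟨-, hflag, hk, hpd⟩
      by_cases h : i = Fin.last n
      · by_cases hfst : (σ i).1 = u
        · rw [hψ1 σ i h hfst]
          exact hx
        · rw [hψ2 σ i h hfst]
          subst h
          have hfsteq : (fun t => ((Function.update σ (Fin.last n)
              ((σ (Fin.last n)).1, !(σ (Fin.last n)).2)) t).1) = fun t => (σ t).1 :=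
            update_last_fst σ _
          refine Finset.mem_filter.mpr ⟨Finset.mem_univ _, ⟨?_, ?_⟩, ?_, ?_⟩
          · rw [hfsteq]; exact hflag.1
          · rw [hfsteq]; exact hflag.2
          · intro t ht
            dsimp only at ht ⊢
            rcases eq_or_ne t (Fin.last n) with rfl | htn
            · exfalso
              apply hfst
              have := congrFun hfsteq (Fin.last n)
              rw [← this]
              exact ht
            · rw [Function.update_of_ne htn] at ht ⊢
              exact hk t ht
          · have hveq : vF lam (Function.update σ (Fin.last n)
                ((σ (Fin.last n)).1, !(σ (Fin.last n)).2)) ∘ (Fin.last n).succAbove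
                = vF lam σ ∘ (Fin.last n).succAbove := by
              funext r
              show lam (pairAt _ ((Fin.last n).succAbove r))
                = lam (pairAt σ ((Fin.last n).succAbove r))
              rw [Fin.succAbove_last, pairAt_update_last]
            simp only [hPD] at hpd ⊢
            rw [hveq]
            exact hpd
      · rw [hψ3 σ i h]
        have hflag' : IsFlagF U (σ ∘ Equiv.swap i ((i.castPred h).succ)) :=
          isFlagF_perm hflag _
        have hk' : KF (σ ∘ Equiv.swap i ((i.castPred h).succ)) := fun t ht => hk _ ht
        have hveq : vF lam (σ ∘ Equiv.swap i ((i.castPred h).succ)) ∘ i.succAbove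
            = vF lam σ ∘ i.succAbove := by
          funext r
          show lam (pairAt (σ ∘ Equiv.swap i ((i.castPred h).succ)) (i.succAbove r))
            = lam (pairAt σ (i.succAbove r))
          rw [pairAt_perm σ _ (fun s => swap_le_iff i h (Fin.succAbove_ne i r) s)]
        refine Finset.mem_filter.mpr ⟨Finset.mem_univ _, hflag', hk', ?_⟩
        simp only [hPD] at hpd ⊢
        rw [hveq]
        exact hpd
    have hinv2 : ∀ x ∈ SP, ψ (ψ x) = x := by
      rintro ⟨σ, i⟩ hx
      by_cases h : i = Fin.last n
      · by_cases hfst : (σ i).1 = u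
        · rw [hψ1 σ i h hfst, hψ1 σ i h hfst]
        · rw [hψ2 σ i h hfst]
          subst h
          have h1 : ((Function.update σ (Fin.last n)
              ((σ (Fin.last n)).1, !(σ (Fin.last n)).2)) (Fin.last n)).1
              = (σ (Fin.last n)).1 := by
            rw [Function.update_self]
          have hfst' : ((Function.update σ (Fin.last n)
              ((σ (Fin.last n)).1, !(σ (Fin.last n)).2)) (Fin.last n)).1 ≠ u := by
            rw [h1]; exact hfst
          rw [hψ2 _ (Fin.last n) rfl hfst']
          refine Prod.ext ?_ rfl
          show Function.update _ (Fin.last n) _ = σ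
          funext t
          rcases eq_or_ne t (Fin.last n) with rfl | htn
          · rw [Function.update_self, Function.update_self]
            simp
          · rw [Function.update_of_ne htn, Function.update_of_ne htn]
      · rw [hψ3 σ i h, hψ3 _ i h]
        refine Prod.ext ?_ rfl
        show (σ ∘ Equiv.swap i ((i.castPred h).succ)) ∘ Equiv.swap i ((i.castPred h).succ) = σ
        funext t
        show σ (Equiv.swap i ((i.castPred h).succ) (Equiv.swap i ((i.castPred h).succ) t)) = σ t
        rw [Equiv.swap_apply_self]
    have hfixchar : ∀ x ∈ SP, (ψ x = x ↔ (x.2 = Fin.last n ∧ (x.1 x.2).1 = u)) := by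
      rintro ⟨σ, i⟩ hx
      rcases Finset.mem_filter.mp hx with ⟨-, hflag, -, -⟩
      constructor
      · intro hfix
        by_cases h : i = Fin.last n
        · refine ⟨h, ?_⟩
          subst h
          by_contra hfst
          rw [hψ2 σ (Fin.last n) rfl hfst] at hfix
          have h1 := congrArg Prod.fst hfix
          simp only at h1
          have h2 := congrFun h1 (Fin.last n)
          rw [Function.update_self] at h2
          have h3 := congrArg Prod.snd h2
          simp only at h3
          exact (Bool.not_ne_self _) h3
        · exfalso
          rw [hψ3 σ i h] at hfix
          have h1 := congrArg Prod.fst hfix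
          simp only at h1
          have h2 := congrFun h1 i
          rw [show (σ ∘ Equiv.swap i ((i.castPred h).succ)) i
            = σ ((i.castPred h).succ) from by
              show σ (Equiv.swap i ((i.castPred h).succ) i) = _
              rw [Equiv.swap_apply_left]] at h2
          have h3 : (i.castPred h).succ = i := hflag.1 (by simpa using congrArg Prod.fst h2)
          have h4 : (i.castPred h).castSucc = i := Fin.castSucc_castPred i h
          have h5 : (i.castPred h).castSucc < (i.castPred h).succ := Fin.castSucc_lt_succ
          rw [h3, h4] at h5
          exact lt_irrefl _ h5
      · rintro ⟨h, hfst⟩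
        exact hψ1 σ i h hfst
    set Bfix := (univ : Finset (Fin (n+1) → ι × Bool)).filter
      (fun σ => IsFlagF U σ ∧ KF σ ∧ (σ (Fin.last n)).1 = u ∧ PD σ (Fin.last n)) with hBfix
    have hfixcard : (SP.filter fun x => ψ x = x).card = Bfix.card := by
      apply Finset.card_bij (fun x _ => x.1)
      · rintro ⟨σ, i⟩ hx
        rcases Finset.mem_filter.mp hx with ⟨hx1, hx2⟩
        obtain ⟨h, hfst⟩ := (hfixchar _ hx1).mp hx2
        rcases Finset.mem_filter.mp hx1 with ⟨-, hflag, hk, hpd⟩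
        simp only at h hfst
        subst h
        exact Finset.mem_filter.mpr ⟨Finset.mem_univ _, hflag, hk, hfst, hpd⟩
      · rintro ⟨σ, i⟩ hx ⟨σ', i'⟩ hx' hh
        rcases Finset.mem_filter.mp hx with ⟨hx1, hx2⟩
        rcases Finset.mem_filter.mp hx' with ⟨hx1', hx2'⟩
        obtain ⟨h, -⟩ := (hfixchar _ hx1).mp hx2
        obtain ⟨h', -⟩ := (hfixchar _ hx1').mp hx2'
        simp only at hh h h'
        exact Prod.ext hh (h.trans h'.symm)
      · intro σ hσ
        rcases Finset.mem_filter.mp hσ with ⟨-, hflag, hk, hfst, hpd⟩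
        have hmem : (σ, Fin.last n) ∈ SP :=
          Finset.mem_filter.mpr ⟨Finset.mem_univ _, hflag, hk, hpd⟩
        exact ⟨(σ, Fin.last n), Finset.mem_filter.mpr
          ⟨hmem, (hfixchar _ hmem).mpr ⟨rfl, hfst⟩⟩, rfl⟩
    have hSpFix : (SP.card : ZMod 2) = (Bfix.card : ZMod 2) := by
      rw [← involution_parity ψ SP hmaps hinv2, hfixcard]
    -- step 8 : restriction bijection with flags over U.erase u
    have hBfixEq : Bfix.card = ((univ : Finset (Fin n → ι × Bool)).filter
        (fun τ => IsFlagF (U.erase u) τ ∧ PAFlag lam τ)).card := by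
      apply Finset.card_bij' (fun σ _ => σ ∘ Fin.castSucc) (fun τ _ => Fin.snoc τ (u, true))
      · intro σ hσ
        rcases Finset.mem_filter.mp hσ with ⟨-, hflag, hk, hfst, hpd⟩
        refine Finset.mem_filter.mpr ⟨Finset.mem_univ _, ⟨?_, ?_⟩, ?_⟩
        · intro a b hab
          exact Fin.castSucc_injective n (hflag.1 hab)
        · ext x
          simp only [Finset.mem_image, Finset.mem_univ, true_and, Function.comp_apply,
            Finset.mem_erase]
          constructor
          · rintro ⟨t, rfl⟩
            refine ⟨?_, ?_⟩
            · intro hc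
              have : t.castSucc = Fin.last n := hflag.1 (hc.trans hfst.symm)
              exact absurd this (Fin.castSucc_lt_last t).ne
            · rw [← hflag.2]
              exact Finset.mem_image.mpr ⟨t.castSucc, Finset.mem_univ _, rfl⟩
          · rintro ⟨hxu, hxU⟩
            rw [← hflag.2] at hxU
            rcases Finset.mem_image.mp hxU with ⟨s, -, rfl⟩
            have hs : s ≠ Fin.last n := by
              intro hc
              exact hxu (by rw [hc]; exact hfst)
            obtain ⟨t, rfl⟩ := Fin.exists_castSucc_eq.mpr hs
            exact ⟨t, rfl⟩
        · have hveq : vF lam (σ ∘ Fin.castSucc) = vF lam σ ∘ (Fin.last n).succAbove :=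
            vF_castSucc lam σ
          simp only [hPD] at hpd
          exact ⟨by rw [hveq]; exact hpd.1, by rw [hveq]; exact hpd.2⟩
      · intro τ hτ
        rcases Finset.mem_filter.mp hτ with ⟨-, hflag, hpa⟩
        have hfsteq := snoc_fst τ ((u, true) : ι × Bool)
        have hmemτ : ∀ s : Fin n, (τ s).1 ∈ U.erase u := by
          intro s
          rw [← hflag.2]
          exact Finset.mem_image.mpr ⟨s, Finset.mem_univ _, rfl⟩
        have hinj' : Function.Injective
            (fun t => ((Fin.snoc τ (u,true) : Fin (n+1) → ι × Bool) t).1) := by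
          rw [hfsteq]
          intro a b hab
          rcases eq_or_ne a (Fin.last n) with rfl | ha
          · rcases eq_or_ne b (Fin.last n) with rfl | hb
            · rfl
            · obtain ⟨s, rfl⟩ := Fin.exists_castSucc_eq.mpr hb
              rw [Fin.snoc_last, Fin.snoc_castSucc] at hab
              exfalso
              have := hmemτ s
              rw [← hab] at this
              exact (Finset.mem_erase.mp this).1 rfl
          · obtain ⟨s, rfl⟩ := Fin.exists_castSucc_eq.mpr ha
            rcases eq_or_ne b (Fin.last n) with rfl | hb
            · rw [Fin.snoc_last, Fin.snoc_castSucc] at hab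
              exfalso
              have := hmemτ s
              rw [hab] at this
              exact (Finset.mem_erase.mp this).1 rfl
            · obtain ⟨s', rfl⟩ := Fin.exists_castSucc_eq.mpr hb
              rw [Fin.snoc_castSucc, Fin.snoc_castSucc] at hab
              exact congrArg Fin.castSucc (hflag.1 hab)
        have himg' : univ.image
            (fun t => ((Fin.snoc τ (u,true) : Fin (n+1) → ι × Bool) t).1) = U := by
          rw [hfsteq]
          ext x
          simp only [Finset.mem_image, Finset.mem_univ, true_and]
          constructor
          · rintro ⟨t, rfl⟩
            rcases eq_or_ne t (Fin.last n) with rfl | h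
            · rw [Fin.snoc_last]
              exact hu
            · obtain ⟨s, rfl⟩ := Fin.exists_castSucc_eq.mpr h
              rw [Fin.snoc_castSucc]
              exact Finset.mem_of_mem_erase (hmemτ s)
          · intro hx
            rcases eq_or_ne x u with rfl | hxu
            · exact ⟨Fin.last n, Fin.snoc_last _ _⟩
            · have hxe : x ∈ U.erase u := Finset.mem_erase.mpr ⟨hxu, hx⟩
              rw [← hflag.2] at hxe
              rcases Finset.mem_image.mp hxe with ⟨s, -, rfl⟩
              exact ⟨s.castSucc, Fin.snoc_castSucc _ _ _⟩
        have hcomp : (Fin.snoc τ ((u,true) : ι × Bool) : Fin (n+1) → ι × Bool)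
            ∘ Fin.castSucc = τ := by
          funext s
          exact Fin.snoc_castSucc _ _ _
        refine Finset.mem_filter.mpr ⟨Finset.mem_univ _, ⟨hinj', himg'⟩, ?_, ?_, ?_⟩
        · intro t ht
          rcases eq_or_ne t (Fin.last n) with rfl | h
          · rw [Fin.snoc_last]
          · obtain ⟨s, rfl⟩ := Fin.exists_castSucc_eq.mpr h
            exfalso
            rw [show ((Fin.snoc τ (u,true) : Fin (n+1) → ι×Bool) s.castSucc) = τ s from
              Fin.snoc_castSucc _ _ _] at ht
            have := hmemτ s
            rw [ht] at this
            exact (Finset.mem_erase.mp this).1 rfl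
        · rw [Fin.snoc_last]
        · simp only [hPD]
          have hveq : vF lam (Fin.snoc τ (u,true) : Fin (n+1) → ι×Bool)
              ∘ (Fin.last n).succAbove = vF lam τ := by
            rw [← vF_castSucc lam _, hcomp]
          rw [hveq]
          exact hpa
      · intro σ hσ
        rcases Finset.mem_filter.mp hσ with ⟨-, hflag, hk, hfst, -⟩
        have hlast : σ (Fin.last n) = (u, true) := by
          have h2 : (σ (Fin.last n)).2 = true := hk _ hfst
          exact Prod.ext hfst h2
        funext t
        rcases eq_or_ne t (Fin.last n) with rfl | h
        · rw [Fin.snoc_last, hlast]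
        · obtain ⟨s, rfl⟩ := Fin.exists_castSucc_eq.mpr h
          rw [Fin.snoc_castSucc]
          rfl
      · intro τ hτ
        funext s
        exact Fin.snoc_castSucc _ _ _
    have hIH := IH (U.erase u) hU'
    rw [hAB, ← hSpB, hSpFix, hBfixEq]
    exact hIH
end Fan

section Kneser

/-- max color (plus one) over `m`-subsets. -/
def gam (n m : ℕ) (c : Finset (Fin n) → ℕ) (A : Finset (Fin n)) : ℕ :=
  (A.powersetCard m).sup fun S => c S + 1

/-- the Tucker labelling associated with a colouring. -/
def lamK (n m : ℕ) (c : Finset (Fin n) → ℕ) (p : Finset (Fin n) × Finset (Fin n)) : ℤ :=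
  if (p.1 ∪ p.2).card ≤ 2*m - 2 then
    (if p.1.min ≤ p.2.min then 1 else -1) * (p.1 ∪ p.2).card
  else
    (if gam n m c p.1 < gam n m c p.2 then -(2*m - 2 + gam n m c p.2 : ℕ)
     else ((2*m - 2 + gam n m c p.1 : ℕ) : ℤ))

theorem kneser_col_false (n m : ℕ) (hm : 1 ≤ m) (hnm : 2*m ≤ n)
    (c : Finset (Fin n) → ℕ)
    (hproper : ∀ S T : Finset (Fin n), S.card = m → T.card = m → Disjoint S T → c S ≠ c T)
    (hbound : ∀ S : Finset (Fin n), S.card = m → c S + 1 ≤ n - 2*m + 1) : False := by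
  classical
  have hgam_ex : ∀ A : Finset (Fin n), 1 ≤ gam n m c A →
      ∃ S, S ⊆ A ∧ S.card = m ∧ c S + 1 = gam n m c A := by
    intro A hA
    have hne : (A.powersetCard m).Nonempty := by
      by_contra h
      rw [Finset.not_nonempty_iff_eq_empty] at h
      rw [gam, h] at hA
      simp at hA
    obtain ⟨S, hS, hSe⟩ := Finset.exists_mem_eq_sup _ hne fun S => c S + 1
    rcases Finset.mem_powersetCard.mp hS with ⟨hSA, hScard⟩
    exact ⟨S, hSA, hScard, hSe.symm⟩
  have hgam_ge : ∀ A : Finset (Fin n), m ≤ A.card → 1 ≤ gam n m c A := by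
    intro A hA
    obtain ⟨S, hS, hScard⟩ := Finset.exists_subset_card_eq hA
    calc 1 ≤ c S + 1 := Nat.le_add_left 1 (c S)
    _ ≤ gam n m c A := by
      unfold gam
      exact Finset.le_sup (f := fun S => c S + 1) (Finset.mem_powersetCard.mpr ⟨hS, hScard⟩)
  have hgam_le : ∀ A, gam n m c A ≤ n - 2*m + 1 := by
    intro A
    unfold gam
    apply Finset.sup_le
    intro S hS
    exact hbound S (Finset.mem_powersetCard.mp hS).2
  have hgam_ne : ∀ A B : Finset (Fin n), Disjoint A B → 2*m - 1 ≤ (A ∪ B).card →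
      gam n m c A ≠ gam n m c B := by
    intro A B hdisj hcard heq
    by_cases h1 : 1 ≤ gam n m c A
    · obtain ⟨S, hSA, hSc, hSe⟩ := hgam_ex A h1
      obtain ⟨T, hTB, hTc, hTe⟩ := hgam_ex B (heq ▸ h1)
      have hceq : c S = c T := by omega
      exact hproper S T hSc hTc
        (Finset.disjoint_of_subset_left hSA (Finset.disjoint_of_subset_right hTB hdisj)) hceq
    · push_neg at h1
      have hA : A.card < m := by
        by_contra hc
        push_neg at hc
        exact absurd (hgam_ge A hc) (by omega)
      have hB : B.card < m := by
        by_contra hc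
        push_neg at hc
        have := hgam_ge B hc
        omega
      have := Finset.card_union_le A B
      omega
  have hmin_ne : ∀ A B : Finset (Fin n), Disjoint A B → (A ∪ B).Nonempty →
      A.min ≠ B.min := by
    intro A B hdisj hne heq
    rcases A.eq_empty_or_nonempty with rfl | hA
    · have hB : B.Nonempty := by simpa using hne
      rw [Finset.min_empty, eq_comm, Finset.min_eq_top] at heq
      exact Finset.nonempty_iff_ne_empty.mp hB heq
    · rcases B.eq_empty_or_nonempty with rfl | hB
      · rw [Finset.min_empty, Finset.min_eq_top] at heq
        exact Finset.nonempty_iff_ne_empty.mp hA heq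
      · have h1 : (↑(A.min' hA) : WithTop (Fin n)) = A.min := Finset.coe_min' hA
        have h2 : (↑(B.min' hB) : WithTop (Fin n)) = B.min := Finset.coe_min' hB
        have h3 : A.min' hA = B.min' hB := by
          have := h1.trans (heq.trans h2.symm)
          exact_mod_cast this
        have hmem := Finset.min'_mem A hA
        rw [h3] at hmem
        exact Finset.disjoint_left.mp hdisj hmem (Finset.min'_mem B hB)
  have hanti : ∀ p : Finset (Fin n) × Finset (Fin n), Disjoint p.1 p.2 →
      lamK n m c (p.2, p.1) = - lamK n m c p := by
    rintro ⟨A, B⟩ hdisj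
    dsimp only at hdisj
    unfold lamK
    dsimp only
    rw [Finset.union_comm B A]
    by_cases hsz : (A ∪ B).card ≤ 2*m - 2
    · rw [if_pos hsz, if_pos hsz]
      rcases (A ∪ B).eq_empty_or_nonempty with hemp | hne
      · rw [hemp]
        simp
      · have hne' := hmin_ne A B hdisj hne
        by_cases hm1 : A.min ≤ B.min
        · have hm2 : ¬ B.min ≤ A.min := fun h => hne' (le_antisymm hm1 h)
          rw [if_pos hm1, if_neg hm2]
          ring
        · have hm2 : B.min ≤ A.min := le_of_not_ge hm1
          rw [if_neg hm1, if_pos hm2]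
          ring
    · rw [if_neg hsz, if_neg hsz]
      have hsz' : 2*m - 1 ≤ (A ∪ B).card := by omega
      have hne' := hgam_ne A B hdisj hsz'
      by_cases hg : gam n m c B < gam n m c A
      · rw [if_pos hg, if_neg (by omega : ¬ gam n m c A < gam n m c B)]
      · have hg2 : gam n m c A < gam n m c B := by omega
        rw [if_neg hg, if_pos hg2]
        push_cast
        ring
  have hedge : ∀ p q : Finset (Fin n) × Finset (Fin n), Disjoint q.1 q.2 →
      p.1 ⊆ q.1 → p.2 ⊆ q.2 → (p.1.Nonempty ∨ p.2.Nonempty) →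
      lamK n m c q ≠ - lamK n m c p := by
    rintro ⟨A, B⟩ ⟨A', B'⟩ hdisj' hsub1 hsub2 hne heq
    dsimp only at hdisj' hsub1 hsub2 hne heq
    have hdisj : Disjoint A B :=
      Finset.disjoint_of_subset_left hsub1 (Finset.disjoint_of_subset_right hsub2 hdisj')
    have hUsub : A ∪ B ⊆ A' ∪ B' := Finset.union_subset_union hsub1 hsub2
    have hUne : (A ∪ B).Nonempty := by
      rcases hne with h | h
      · exact h.mono Finset.subset_union_left
      · exact h.mono Finset.subset_union_right
    have hUcard : 1 ≤ (A ∪ B).card := Finset.card_pos.mpr hUne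
    have hUle : (A ∪ B).card ≤ (A' ∪ B').card := Finset.card_le_card hUsub
    unfold lamK at heq
    dsimp only at heq
    -- common sub-derivation for the "both small, cards equal" case
    have hsets : (A' ∪ B').card = (A ∪ B).card → A = A' ∧ B = B' := by
      intro hcc
      have hUU : A ∪ B = A' ∪ B' :=
        Finset.eq_of_subset_of_card_le hUsub (le_of_eq hcc)
      constructor
      · apply Finset.Subset.antisymm hsub1
        intro x hx
        have hxU : x ∈ A ∪ B := hUU ▸ (Finset.mem_union_left _ hx)
        rcases Finset.mem_union.mp hxU with h | h
        · exact h
        · exact absurd hx (Finset.disjoint_right.mp hdisj' (hsub2 h))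
      · apply Finset.Subset.antisymm hsub2
        intro x hx
        have hxU : x ∈ A ∪ B := hUU ▸ (Finset.mem_union_right _ hx)
        rcases Finset.mem_union.mp hxU with h | h
        · exact absurd hx (Finset.disjoint_left.mp hdisj' (hsub1 h))
        · exact h
    by_cases hq : (A' ∪ B').card ≤ 2*m - 2
    · have hp : (A ∪ B).card ≤ 2*m - 2 := le_trans hUle hq
      rw [if_pos hq, if_pos hp] at heq
      by_cases hm1 : A'.min ≤ B'.min <;> by_cases hm2 : A.min ≤ B.min
      · rw [if_pos hm1, if_pos hm2] at heq
        push_cast at heq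
        omega
      · rw [if_pos hm1, if_neg hm2] at heq
        push_cast at heq
        obtain ⟨hAA, hBB⟩ := hsets (by omega)
        rw [hAA, hBB] at hm2
        exact hm2 hm1
      · rw [if_neg hm1, if_pos hm2] at heq
        push_cast at heq
        obtain ⟨hAA, hBB⟩ := hsets (by omega)
        rw [hAA, hBB] at hm2
        exact hm1 hm2
      · rw [if_neg hm1, if_neg hm2] at heq
        push_cast at heq
        omega
    · rw [if_neg hq] at heq
      have hq' : 2*m - 1 ≤ (A' ∪ B').card := by omega
      have hcards' : m ≤ A'.card ∨ m ≤ B'.card := by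
        have h1 := Finset.card_union_le A' B'
        omega
      have hgA' : m ≤ A'.card → 1 ≤ gam n m c A' := hgam_ge A'
      have hgB' : m ≤ B'.card → 1 ≤ gam n m c B' := hgam_ge B'
      by_cases hpsmall : (A ∪ B).card ≤ 2*m - 2
      · rw [if_pos hpsmall] at heq
        by_cases hg : gam n m c A' < gam n m c B'
        · rw [if_pos hg] at heq
          have h1 : 1 ≤ gam n m c B' := by
            rcases hcards' with h | h
            · have := hgA' h; omega
            · exact hgB' h
          by_cases hm2 : A.min ≤ B.min <;>
            [rw [if_pos hm2] at heq; rw [if_neg hm2] at heq] <;>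
            push_cast at heq <;> omega
        · rw [if_neg hg] at heq
          have h1 : 1 ≤ gam n m c A' := by
            rcases hcards' with h | h
            · exact hgA' h
            · have := hgB' h; omega
          by_cases hm2 : A.min ≤ B.min <;>
            [rw [if_pos hm2] at heq; rw [if_neg hm2] at heq] <;>
            push_cast at heq <;> omega
      · rw [if_neg hpsmall] at heq
        have hp' : 2*m - 1 ≤ (A ∪ B).card := by omega
        have hpcards : m ≤ A.card ∨ m ≤ B.card := by
          have := Finset.card_union_le A B
          omega
        have hgA : m ≤ A.card → 1 ≤ gam n m c A := hgam_ge A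
        have hgB : m ≤ B.card → 1 ≤ gam n m c B := hgam_ge B
        by_cases hg1 : gam n m c A' < gam n m c B' <;>
          by_cases hg2 : gam n m c A < gam n m c B
        · rw [if_pos hg1, if_pos hg2] at heq
          push_cast at heq
          omega
        · rw [if_pos hg1, if_neg hg2] at heq
          push_cast at heq
          have hgeq : gam n m c B' = gam n m c A := by omega
          have h1 : 1 ≤ gam n m c A := by
            rcases hpcards with h | h
            · exact hgA h
            · have := hgB h; omega
          obtain ⟨S, hSA, hSc, hSe⟩ := hgam_ex A h1
          obtain ⟨T, hTB, hTc, hTe⟩ := hgam_ex B' (hgeq ▸ h1)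
          refine hproper S T hSc hTc ?_ (by omega)
          exact Finset.disjoint_of_subset_left (hSA.trans hsub1)
            (Finset.disjoint_of_subset_right hTB hdisj')
        · rw [if_neg hg1, if_pos hg2] at heq
          push_cast at heq
          have hgeq : gam n m c A' = gam n m c B := by omega
          have h1 : 1 ≤ gam n m c B := by omega
          obtain ⟨S, hSA, hSc, hSe⟩ := hgam_ex A' (hgeq ▸ h1)
          obtain ⟨T, hTB, hTc, hTe⟩ := hgam_ex B h1
          refine hproper S T hSc hTc ?_ (by omega)
          exact Finset.disjoint_of_subset_left hSA
            (Finset.disjoint_of_subset_right (hTB.trans hsub2) hdisj')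
        · rw [if_neg hg1, if_neg hg2] at heq
          push_cast at heq
          have h1 : 1 ≤ gam n m c A := by
            rcases hpcards with h | h
            · exact hgA h
            · have := hgB h; omega
          omega
    -- the main application
  have hfan := fan (lamK n m c) hanti hedge n (univ : Finset (Fin n)) (by simp)
  have hnee : ∃ σ : Fin n → (Fin n) × Bool,
      IsFlagF univ σ ∧ PAFlag (lamK n m c) σ := by
    by_contra h
    have hemp : ((univ : Finset (Fin n → (Fin n) × Bool)).filter
        fun σ => IsFlagF univ σ ∧ PAFlag (lamK n m c) σ) = ∅ := by
      rw [Finset.filter_eq_empty_iff]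
      intro σ _ hp
      exact h ⟨σ, hp⟩
    rw [hemp, Finset.card_empty, Nat.cast_zero] at hfan
    exact absurd hfan (by decide)
  obtain ⟨σ, hflag, hinjv, hpos⟩ := hnee
  have hnoPM : NoPM (univ.image (vF (lamK n m c) σ)) :=
    noPM_image (vF_noPM _ hedge hflag.1)
  have habs : ∀ p : Finset (Fin n) × Finset (Fin n), Disjoint p.1 p.2 →
      |lamK n m c p| ≤ (n:ℤ) - 1 := by
    rintro ⟨A, B⟩ hd
    unfold lamK
    dsimp only
    by_cases hsz : (A ∪ B).card ≤ 2*m - 2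
    · rw [if_pos hsz, abs_mul]
      have h1 : |if A.min ≤ B.min then (1:ℤ) else -1| = 1 := by
        split <;> simp
      rw [h1, one_mul, Nat.abs_cast]
      push_cast
      omega
    · rw [if_neg hsz]
      by_cases hg : gam n m c A < gam n m c B
      · rw [if_pos hg, abs_neg, Nat.abs_cast]
        have := hgam_le B
        push_cast
        omega
      · rw [if_neg hg, Nat.abs_cast]
        have := hgam_le A
        push_cast
        omega
  have hVcard : (univ.image (vF (lamK n m c) σ)).card = n := by
    rw [Finset.card_image_of_injective _ hinjv, Finset.card_univ, Fintype.card_fin]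
  have hWcard : ((univ.image (vF (lamK n m c) σ)).image (fun v => |v|)).card = n := by
    rw [Finset.card_image_of_injOn, hVcard]
    intro x hx y hy hxy
    rcases abs_eq_abs.mp hxy with h | h
    · exact h
    · exfalso
      rw [h] at hx
      exact hnoPM y hy hx
  have hWic : (univ.image (vF (lamK n m c) σ)).image (fun v => |v|)
      ⊆ Finset.Icc 1 ((n:ℤ) - 1) := by
    intro w hw
    rcases Finset.mem_image.mp hw with ⟨v, hv, rfl⟩
    rcases Finset.mem_image.mp hv with ⟨t, -, rfl⟩
    have h1 : |vF (lamK n m c) σ t| ≤ (n:ℤ) - 1 :=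
      habs _ (pairAt_disjoint hflag.1 t)
    have h2 : vF (lamK n m c) σ t ≠ 0 := by
      intro h0
      have hmem : vF (lamK n m c) σ t ∈ univ.image (vF (lamK n m c) σ) :=
        Finset.mem_image.mpr ⟨t, Finset.mem_univ _, rfl⟩
      have := hnoPM _ hmem
      rw [h0] at this hmem
      rw [neg_zero] at this
      exact this hmem
    rw [Finset.mem_Icc]
    exact ⟨Int.one_le_abs (by omega), h1⟩
  have hcc := Finset.card_le_card hWic
  rw [hWcard, Int.card_Icc] at hcc
  omega

end Kneser


theorem chromNum_eq_of {α : Type*} (G : SimpleGraph α) (r : ℕ) (h1 : G.Colorable r)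
    (h2 : ∀ s, G.Colorable s → r ≤ s) : chromNum G = r := by
  unfold chromNum
  apply le_antisymm
  · exact Nat.sInf_le h1
  · exact le_csInf ⟨r, h1⟩ h2

theorem minNonfaces_skel (n k : ℕ) (σ : Finset (Fin n)) :
    σ ∈ minNonfaces (simplexSkeleton n k) ↔ σ.card = k + 2 := by
  unfold minNonfaces simplexSkeleton
  simp only [Set.mem_setOf_eq, Finset.mem_filter, Finset.mem_univ, true_and, not_le]
  constructor
  · rintro ⟨h1, h2⟩
    by_contra hne
    have hlt : k + 2 ≤ σ.card := by omega
    obtain ⟨τ, hτsub, hτcard⟩ := Finset.exists_subset_card_eq hlt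
    have hss : τ ⊂ σ := Finset.ssubset_iff_subset_ne.mpr
      ⟨hτsub, fun h => by rw [h] at hτcard; omega⟩
    have := h2 τ hss
    omega
  · intro hc
    refine ⟨by omega, fun τ hτ => ?_⟩
    have := Finset.card_lt_card hτ
    omega

/-- The `n - 2m + 2`-colouring of the Kneser graph by minima. -/
theorem kneser_colorable (n k : ℕ) (hkn : k + 2 ≤ n) :
    (kneserGraph (minNonfaces (simplexSkeleton n k))).Colorable (n - 2*(k+2) + 2) := by
  classical
  set m := k + 2 with hm
  have hne : ∀ A : {σ // σ ∈ minNonfaces (simplexSkeleton n k)}, A.1.Nonempty := by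
    intro A
    have := (minNonfaces_skel n k A.1).mp A.2
    rw [← Finset.card_pos, this]
    omega
  refine ⟨SimpleGraph.Coloring.mk
    (fun A => ⟨min ((A.1.min' (hne A)) : ℕ) (n - 2*m + 1), by omega⟩) ?_⟩
  intro A B hadj heq
  have hAc : A.1.card = m := (minNonfaces_skel n k A.1).mp A.2
  have hBc : B.1.card = m := (minNonfaces_skel n k B.1).mp B.2
  have hdisj : Disjoint A.1 B.1 := hadj.2
  have heq' : min ((A.1.min' (hne A)) : ℕ) (n - 2*m + 1)
      = min ((B.1.min' (hne B)) : ℕ) (n - 2*m + 1) := congrArg Fin.val heq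
  by_cases ha : ((A.1.min' (hne A)) : ℕ) < n - 2*m + 1 <;>
    by_cases hb : ((B.1.min' (hne B)) : ℕ) < n - 2*m + 1
  · -- both small: same minimum element
    have hv : ((A.1.min' (hne A)) : ℕ) = ((B.1.min' (hne B)) : ℕ) := by omega
    have : A.1.min' (hne A) = B.1.min' (hne B) := Fin.val_injective hv
    have h1 := Finset.min'_mem A.1 (hne A)
    rw [this] at h1
    exact Finset.disjoint_left.mp hdisj h1 (Finset.min'_mem B.1 (hne B))
  · omega
  · omega
  · -- both sets live in the top 2m-1 coordinates
    push_neg at ha hb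
    have hsub : ∀ x ∈ A.1 ∪ B.1, n - 2*m + 1 ≤ (x : ℕ) := by
      intro x hx
      rcases Finset.mem_union.mp hx with h | h
      · exact le_trans ha (Finset.min'_le A.1 x h)
      · exact le_trans hb (Finset.min'_le B.1 x h)
    have hcard : (A.1 ∪ B.1).card = 2*m := by
      rw [Finset.card_union_of_disjoint hdisj, hAc, hBc]
      ring
    have hinj : ((A.1 ∪ B.1).card : ℕ) ≤ (Finset.Ico (n - 2*m + 1) n).card := by
      apply Finset.card_le_card_of_injOn (f := fun x : Fin n => (x : ℕ))
      · intro x hx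
        rw [Finset.mem_coe, Finset.mem_Ico]
        exact ⟨hsub x hx, x.isLt⟩
      · intro x _ y _ hxy
        exact Fin.val_injective hxy
    rw [hcard, Nat.card_Ico] at hinj
    omega

theorem chromNum_skel_big (n k : ℕ) (hn : 2*k + 4 ≤ n) :
    chromNum (kneserGraph (minNonfaces (simplexSkeleton n k))) = n - 2*(k+2) + 2 := by
  classical
  apply chromNum_eq_of
  · exact kneser_colorable n k (by omega)
  · intro s hs
    by_contra hlt
    push_neg at hlt
    have hbig : 2*(k+2) ≤ n := by omega
    have hcol : (kneserGraph (minNonfaces (simplexSkeleton n k))).Colorable (n - 2*(k+2) + 1) :=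
      hs.mono (by omega)
    obtain ⟨C⟩ := hcol
    set c : Finset (Fin n) → ℕ := fun S =>
      if h : S ∈ minNonfaces (simplexSkeleton n k) then (C ⟨S, h⟩ : ℕ) else 0 with hc
    apply kneser_col_false n (k+2) (by omega) hbig c
    · intro S T hSc hTc hdisj hceq
      have hSm : S ∈ minNonfaces (simplexSkeleton n k) := (minNonfaces_skel n k S).mpr hSc
      have hTm : T ∈ minNonfaces (simplexSkeleton n k) := (minNonfaces_skel n k T).mpr hTc
      have hST : S ≠ T := by
        intro h
        subst h
        have hSe : S = ∅ := by
          have := disjoint_self.mp hdisj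
          simpa using this
        rw [hSe] at hSc
        simp at hSc
      have hadj : (kneserGraph (minNonfaces (simplexSkeleton n k))).Adj ⟨S, hSm⟩ ⟨T, hTm⟩ :=
        ⟨fun h => hST (congrArg Subtype.val h), hdisj⟩
      have := C.valid hadj
      apply this
      have h1 : c S = (C ⟨S, hSm⟩ : ℕ) := by rw [hc]; exact dif_pos hSm
      have h2 : c T = (C ⟨T, hTm⟩ : ℕ) := by rw [hc]; exact dif_pos hTm
      rw [h1, h2] at hceq
      exact Fin.val_injective hceq
    · intro S hSc
      have hSm : S ∈ minNonfaces (simplexSkeleton n k) := (minNonfaces_skel n k S).mpr hSc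
      have h1 : c S = (C ⟨S, hSm⟩ : ℕ) := by rw [hc]; exact dif_pos hSm
      have := (C ⟨S, hSm⟩).isLt
      omega

theorem chromNum_skel_mid (n k : ℕ) (hkn : k + 2 ≤ n) (hn : n < 2*(k+2)) :
    chromNum (kneserGraph (minNonfaces (simplexSkeleton n k))) = 1 := by
  classical
  have hnoadj : ∀ A B : {σ // σ ∈ minNonfaces (simplexSkeleton n k)},
      ¬ (kneserGraph (minNonfaces (simplexSkeleton n k))).Adj A B := by
    intro A B hadj
    have hAc : A.1.card = k + 2 := (minNonfaces_skel n k A.1).mp A.2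
    have hBc : B.1.card = k + 2 := (minNonfaces_skel n k B.1).mp B.2
    have hdisj : Disjoint A.1 B.1 := hadj.2
    have hcard : (A.1 ∪ B.1).card = 2*(k+2) := by
      rw [Finset.card_union_of_disjoint hdisj, hAc, hBc]
      ring
    have hle : (A.1 ∪ B.1).card ≤ n := by
      have := Finset.card_le_univ (A.1 ∪ B.1)
      rwa [Fintype.card_fin] at this
    omega
  apply chromNum_eq_of
  · exact ⟨SimpleGraph.Coloring.mk (fun _ => (0 : Fin 1))
      (fun {A B} hadj => absurd hadj (hnoadj A B))⟩
  · intro s hs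
    by_contra hlt
    push_neg at hlt
    have hs0 : s = 0 := by omega
    subst hs0
    obtain ⟨C⟩ := hs
    obtain ⟨S₀, hS₀sub, hS₀⟩ :=
      Finset.exists_subset_card_eq (show k + 2 ≤ (univ : Finset (Fin n)).card by
        rw [Finset.card_univ, Fintype.card_fin]; omega)
    exact (C ⟨S₀, (minNonfaces_skel n k S₀).mpr hS₀⟩).elim0

theorem chromNum_skel_top (n k : ℕ) (hkn : n < k + 2) :
    chromNum (kneserGraph (minNonfaces (simplexSkeleton n k))) = 0 := by
  classical
  have hempty : ∀ σ : Finset (Fin n), σ ∉ minNonfaces (simplexSkeleton n k) := by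
    intro σ hσ
    have hc := (minNonfaces_skel n k σ).mp hσ
    have : σ.card ≤ n := by
      have := Finset.card_le_univ σ
      rwa [Fintype.card_fin] at this
    omega
  apply chromNum_eq_of
  · exact ⟨SimpleGraph.Coloring.mk (fun A => absurd A.2 (hempty A.1))
      (fun {A B} _ => absurd A.2 (hempty A.1))⟩
  · intro s _
    exact Nat.zero_le s


end SindAux



/-- the Sarkaria index of the `k`-skeleton of the
`(n−1)`-simplex: `2k+1` for `k ≤ (n−3)/2`, `n−2` for `(n−3)/2 < k ≤ n−2`,
and `n−1` for `k = n−1`. -/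
theorem sind_simplex_skeleton (n k : ℕ) (hn : 2 ≤ n) (hk : k ≤ n - 1) :
    (2 * k + 3 ≤ n → Sind (simplexSkeleton n k) = 2 * (k : ℤ) + 1) ∧
    (n < 2 * k + 3 → k + 2 ≤ n → Sind (simplexSkeleton n k) = (n : ℤ) - 2) ∧
    (k = n - 1 → Sind (simplexSkeleton n k) = (n : ℤ) - 1) := by
  refine ⟨?_, ?_, ?_⟩
  · intro h1
    unfold Sind
    by_cases hbig : 2*k + 4 ≤ n
    · rw [SindAux.chromNum_skel_big n k hbig, Fintype.card_fin]
      omega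
    · rw [SindAux.chromNum_skel_mid n k (by omega) (by omega), Fintype.card_fin]
      omega
  · intro h1 h2
    unfold Sind
    rw [SindAux.chromNum_skel_mid n k h2 (by omega), Fintype.card_fin]
    omega
  · intro h1
    unfold Sind
    rw [SindAux.chromNum_skel_top n k (by omega), Fintype.card_fin]
    omega
end
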